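/- arXiv:1703.00283 — 5 statements merged into one kernel-verified Lean document; each statement's English description precedes it below -/
import Mathlib

section
/- Let p = 0. For every 0 ≤ s < 1 one has T₊(s) ≤ 8(|q| + 1) · P_{γ,+}(s) + B₊(s). -/
open MeasureTheory Metric Complex Set ENNReal
open scoped Classical

noncomputable section

/-- positive part of the logarithm: `log⁺ t = max (log t) 0`. -/
def logPlus (t : ℝ) : ℝ := max (Real.log t) 0

/-- negative part of the logarithm: `log⁻ t = max (-log t) 0`. -/
def logMinus (t : ℝ) : ℝ := max (-Real.log t) 0

/-- `|R(z)| = ∏ j |z - η j| ^ (q j)`. -/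
def Rabs {n : ℕ} (η : Fin n → ℂ) (q : Fin n → ℝ) (z : ℂ) : ℝ :=
  ∏ j, ‖z - η j‖ ^ q j

/-- Laplacian of a real valued function on `ℂ`:
`Δg(z) = ∂²g/∂x²(z) + ∂²g/∂y²(z)`. -/
def lap (g : ℂ → ℝ) (z : ℂ) : ℝ :=
  iteratedDeriv 2 (fun t : ℝ => g (z + (t : ℂ))) 0 +
  iteratedDeriv 2 (fun t : ℝ => g (z + (t : ℂ) * Complex.I)) 0

/-- the order of vanishing of `f` at `a` (0 if `f` is not analytic at `a`). -/
def zeroOrder (f : ℂ → ℂ) (a : ℂ) : ℕ :=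
  if h : AnalyticAt ℂ f a then (analyticOrderAt f a).toNat else 0

/-- the sum, over the zeros `a` of `f` in the unit disc counted with multiplicity,
of the weight `w a`, computed in `ℝ≥0∞`. -/
def zeroSum (f : ℂ → ℂ) (w : ℂ → ℝ) : ℝ≥0∞ :=
  ∑' a : (ball (0 : ℂ) 1 : Set ℂ), (zeroOrder f a : ℝ≥0∞) * ENNReal.ofReal (w a)

/-- `M(ρ) = sup_θ |R(ρ e^{iθ})|²`. -/
def Msup {n : ℕ} (η : Fin n → ℂ) (q : Fin n → ℝ) (ρ : ℝ) : ℝ :=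
  ⨆ θ : ℝ, (Rabs η q ((ρ : ℂ) * Complex.exp ((θ : ℂ) * Complex.I))) ^ 2

/-- `m(ρ) = inf_θ |R(ρ e^{iθ})|²`. -/
def minf {n : ℕ} (η : Fin n → ℂ) (q : Fin n → ℝ) (ρ : ℝ) : ℝ :=
  ⨅ θ : ℝ, (Rabs η q ((ρ : ℂ) * Complex.exp ((θ : ℂ) * Complex.I))) ^ 2

/-- `c(δ,u) = sup_{0≤s<1} sup_{0≤ρ<u} (M(sρ)/m(sρ)) (1-ρ²)^δ`. -/
def cconst {n : ℕ} (η : Fin n → ℂ) (q : Fin n → ℝ) (δ u : ℝ) : ℝ :=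
  ⨆ s : (Ico (0:ℝ) 1 : Set ℝ), ⨆ ρ : (Ico (0:ℝ) u : Set ℝ),
    (Msup η q ((s : ℝ) * (ρ : ℝ)) / minf η q ((s : ℝ) * (ρ : ℝ))) * (1 - (ρ : ℝ) ^ 2) ^ δ


/-!
Along the lines `t ↦ z + t` and `t ↦ z + t I`, write `|R(s w)|² = exp (2 log |R(s w)|)`; the
derivative of `log |R(x + t v)|` is `Re (v R'/R)`. Adding the two second derivatives, the terms
involving `(R'/R)'` cancel (harmonicity of `log |R|`), and with `H = R'/R (s z)`
`Δg(z) = |R(s z)|² (-4 - 8 s Re (z H) + 4 s² (1 - |z|²) |H|²)`.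
Since `|H| ≤ γ(s z)` and `1 - |z|² ≤ 2 |s z - η j|`, the bracket is at most `8 (|q| + 1) γ(s z)`.
Multiplying by `log⁺ |f(s z)| ≥ 0` and integrating gives the claim; for `s < 1` all integrands are
continuous on the closed disc, hence integrable.
-/

open Filter Topology

lemma logPlus_eq_posLog : logPlus = Real.posLog := funext fun _ => max_comm _ _

lemma hasDerivAt_add_mul_ofReal (x w : ℂ) (t : ℝ) :
    HasDerivAt (fun t : ℝ => x + t * w) w t := by
  simpa using ((hasDerivAt_id t).ofReal_comp.mul_const w).const_add x

lemma hasDerivAt_log_norm_add_mul {c w : ℂ} {t : ℝ} (h : c + t * w ≠ 0) :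
    HasDerivAt (fun t : ℝ => Real.log ‖c + t * w‖) (w / (c + t * w)).re t := by
  have hsq := ((hasDerivAt_add_mul_ofReal c w t).norm_sq.log (by positivity)).div_const 2
  have hfun : (fun t : ℝ => Real.log ‖c + t * w‖) =
      fun t : ℝ => Real.log (‖c + t * w‖ ^ 2) / 2 := by
    funext t; rw [Real.log_pow]; push_cast; ring
  rw [hfun]
  refine hsq.congr_deriv ?_
  have : Complex.normSq (c + t * w) ≠ 0 := by simpa using h
  rw [Complex.inner, Complex.div_re, ← Complex.normSq_eq_norm_sq]
  simp only [Complex.mul_re, Complex.conj_re, Complex.conj_im]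
  field_simp
  ring

lemma iteratedDeriv_two_mul_of_hasDerivAt_logDeriv {u u' P ψ : ℝ → ℝ} {u'' ψ' : ℝ}
    (hu : ∀ t, HasDerivAt u (u' t) t) (hu' : HasDerivAt u' u'' 0)
    (hP : ∀ᶠ t in 𝓝 0, HasDerivAt P (P t * ψ t) t) (hψ : HasDerivAt ψ ψ' 0) :
    iteratedDeriv 2 (fun t => u t * P t) 0 =
      P 0 * (u'' + 2 * u' 0 * ψ 0 + u 0 * (ψ 0 ^ 2 + ψ')) := by
  have hderiv : deriv (fun t => u t * P t) =ᶠ[𝓝 0]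
      fun t => u' t * P t + u t * (P t * ψ t) := by
    filter_upwards [hP] with t ht using ((hu t).mul ht).deriv
  have hP0 := hP.self_of_nhds
  rw [iteratedDeriv_succ, iteratedDeriv_one, hderiv.deriv_eq,
    ((hu'.fun_mul hP0).fun_add ((hu 0).fun_mul (hP0.fun_mul hψ))).deriv]
  ring

lemma ContinuousOn.integrableOn_ball {X E : Type*} [MetricSpace X] [ProperSpace X]
    [MeasurableSpace X] [OpensMeasurableSpace X] [NormedAddCommGroup E] {μ : Measure X}
    [IsFiniteMeasureOnCompacts μ] {g : X → E} {x : X} {r : ℝ}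
    (hg : ContinuousOn g (closedBall x r)) : IntegrableOn g (ball x r) μ :=
  (hg.integrableOn_compact (isCompact_closedBall x r)).mono_set ball_subset_closedBall

lemma one_sub_mul_norm_le_norm_mul_sub {e z : ℂ} {s : ℝ} (he : ‖e‖ = 1) (hs : 0 ≤ s) :
    1 - s * ‖z‖ ≤ ‖s * z - e‖ := by
  have := norm_sub_norm_le e (s * z)
  rwa [he, norm_sub_rev, norm_mul, Complex.norm_real, Real.norm_of_nonneg hs] at this

section Weight

variable {n : ℕ} (η : Fin n → ℂ) (q : Fin n → ℝ)

/-- `log |R(x)|`. -/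
def RlogAbs (x : ℂ) : ℝ := ∑ j, q j * Real.log ‖x - η j‖

/-- `R'(x) / R(x)` for `R(x) = ∏ j (x - η j) ^ q j`. -/
def RlogDeriv (x : ℂ) : ℂ := ∑ j, (q j : ℂ) / (x - η j)

variable {η q}

lemma Rabs_sq_eq_exp {x : ℂ} (hx : ∀ j, x ≠ η j) :
    Rabs η q x ^ 2 = Real.exp (2 * RlogAbs η q x) := by
  rw [Rabs, RlogAbs, Finset.mul_sum, Real.exp_sum, ← Finset.prod_pow]
  refine Finset.prod_congr rfl fun j _ => ?_
  rw [Real.rpow_def_of_pos (norm_pos_iff.2 (sub_ne_zero.2 (hx j))), ← Real.exp_nat_mul]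
  ring_nf

lemma continuousOn_Rabs : ContinuousOn (Rabs η q) {x | ∀ j, x ≠ η j} :=
  continuousOn_finsetProd _ fun j _ =>
    (continuous_norm.comp (continuous_sub_right (η j))).continuousOn.rpow_const
      fun _ hx => Or.inl (norm_ne_zero_iff.2 (sub_ne_zero.2 (hx j)))

lemma differentiableAt_RlogDeriv {x : ℂ} (hx : ∀ j, x ≠ η j) :
    DifferentiableAt ℂ (RlogDeriv η q) x := by
  unfold RlogDeriv
  fun_prop (disch := exact sub_ne_zero.2 (hx _))

lemma continuousOn_RlogDeriv : ContinuousOn (RlogDeriv η q) {x | ∀ j, x ≠ η j} :=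
  fun _ hx => (differentiableAt_RlogDeriv hx).continuousAt.continuousWithinAt

lemma continuousOn_sum_abs_mul_inv_norm_sub :
    ContinuousOn (fun x => ∑ j, |q j| * ‖x - η j‖⁻¹) {x | ∀ j, x ≠ η j} :=
  continuousOn_finsetSum _ fun j _ => continuousOn_const.mul <|
    (continuous_norm.comp (continuous_sub_right (η j))).continuousOn.inv₀
      fun _ hx => norm_ne_zero_iff.2 (sub_ne_zero.2 (hx j))

lemma norm_RlogDeriv_le (x : ℂ) : ‖RlogDeriv η q x‖ ≤ ∑ j, |q j| * ‖x - η j‖⁻¹ := by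
  refine (norm_sum_le _ _).trans (Finset.sum_le_sum fun j _ => ?_)
  rw [norm_div, Complex.norm_real, Real.norm_eq_abs, div_eq_mul_inv]

lemma eventually_add_mul_ne {x w : ℂ} {t : ℝ} (h : ∀ j, x + t * w ≠ η j) :
    ∀ᶠ τ : ℝ in 𝓝 t, ∀ j, x + τ * w ≠ η j :=
  eventually_all.2 fun j => ContinuousAt.eventually_ne (by fun_prop) (h j)

lemma hasDerivAt_RlogAbs_add_mul {x w : ℂ} {t : ℝ} (h : ∀ j, x + t * w ≠ η j) :
    HasDerivAt (fun t : ℝ => RlogAbs η q (x + t * w)) (w * RlogDeriv η q (x + t * w)).re t := by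
  simp only [RlogAbs, RlogDeriv, Finset.mul_sum, Complex.re_sum]
  refine HasDerivAt.fun_sum fun j _ => ?_
  have hj : x - η j + t * w ≠ 0 := by
    rw [sub_add_eq_add_sub]; exact sub_ne_zero.2 (h j)
  have hshift : ∀ τ : ℝ, x + τ * w - η j = x - η j + τ * w := fun τ => by ring
  simp only [hshift]
  refine ((hasDerivAt_log_norm_add_mul hj).const_mul (q j)).congr_deriv ?_
  rw [mul_div_left_comm, Complex.re_ofReal_mul]

lemma hasDerivAt_Rabs_sq_add_mul {x w : ℂ} {t : ℝ} (h : ∀ j, x + t * w ≠ η j) :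
    HasDerivAt (fun t : ℝ => Rabs η q (x + t * w) ^ 2)
      (Rabs η q (x + t * w) ^ 2 * (2 * (w * RlogDeriv η q (x + t * w)).re)) t := by
  rw [Rabs_sq_eq_exp h]
  refine (((hasDerivAt_RlogAbs_add_mul h).const_mul 2).exp).congr_of_eventuallyEq ?_
  filter_upwards [eventually_add_mul_ne h] with τ hτ using Rabs_sq_eq_exp hτ

lemma iteratedDeriv_two_weight_line {s : ℝ} {z : ℂ} (v : ℂ) (h : ∀ j, s * z ≠ η j) :
    iteratedDeriv 2 (fun t : ℝ => (1 - ‖z + t * v‖ ^ 2) * Rabs η q (s * (z + t * v)) ^ 2) 0 =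
      Rabs η q (s * z) ^ 2 *
        (-2 * ‖v‖ ^ 2 - 8 * inner ℝ z v * (s * v * RlogDeriv η q (s * z)).re +
          (1 - ‖z‖ ^ 2) * (4 * (s * v * RlogDeriv η q (s * z)).re ^ 2 +
            2 * (s * v * (deriv (RlogDeriv η q) (s * z) * (s * v))).re)) := by
  have hline : ∀ t : ℝ, (s : ℂ) * (z + t * v) = s * z + t * (s * v) := fun t => by ring
  simp only [hline]
  have h0 : ∀ j, (s : ℂ) * z + (0 : ℝ) * (s * v) ≠ η j := by simpa using h
  have hu : ∀ t : ℝ, HasDerivAt (fun t : ℝ => 1 - ‖z + t * v‖ ^ 2)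
      (-(2 * inner ℝ (z + t * v) v)) t := fun t => by
    simpa using ((hasDerivAt_add_mul_ofReal z v t).norm_sq).const_sub 1
  have hu' : HasDerivAt (fun t : ℝ => -(2 * inner ℝ (z + t * v) v)) (-(2 * ‖v‖ ^ 2)) 0 := by
    refine ((((hasDerivAt_add_mul_ofReal z v 0).inner ℝ
      (hasDerivAt_const 0 v)).const_mul 2).neg).congr_deriv ?_
    simp
  have hψ : HasDerivAt (fun t : ℝ => 2 * (s * v * RlogDeriv η q (s * z + t * (s * v))).re)
      (2 * (s * v * (deriv (RlogDeriv η q) (s * z) * (s * v))).re) 0 := by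
    have hH : HasDerivAt (RlogDeriv η q) (deriv (RlogDeriv η q) (s * z))
        ((fun t : ℝ => (s : ℂ) * z + t * (s * v)) 0) := by
      simpa using (differentiableAt_RlogDeriv h).hasDerivAt
    have := (hH.comp 0 (hasDerivAt_add_mul_ofReal _ _ 0)).const_mul ((s : ℂ) * v)
    exact (Complex.reCLM.hasFDerivAt.comp_hasDerivAt 0 this).const_mul 2
  rw [iteratedDeriv_two_mul_of_hasDerivAt_logDeriv hu hu'
    ((eventually_add_mul_ne h0).mono fun t ht => hasDerivAt_Rabs_sq_add_mul ht) hψ]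
  simp only [Complex.ofReal_zero, zero_mul, add_zero]
  ring

lemma lap_weight_eq {s : ℝ} {z : ℂ} (h : ∀ j, s * z ≠ η j) :
    lap (fun w => (1 - ‖w‖ ^ 2) * Rabs η q (s * w) ^ 2) z =
      Rabs η q (s * z) ^ 2 * (-4 - 8 * s * (z * RlogDeriv η q (s * z)).re +
        4 * s ^ 2 * (1 - ‖z‖ ^ 2) * ‖RlogDeriv η q (s * z)‖ ^ 2) := by
  have h1 := iteratedDeriv_two_weight_line (q := q) 1 h
  have h2 := iteratedDeriv_two_weight_line (q := q) Complex.I h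
  simp only [mul_one] at h1
  rw [lap, h1, h2]
  -- the terms with `deriv (RlogDeriv η q)` cancel since `(s I)² = -s²`: `log |R|` is harmonic
  simp only [norm_one, one_pow, mul_one, Complex.inner, one_mul, conj_re, mul_re, ofReal_re,
    ofReal_im, zero_mul, sub_zero, Complex.sq_norm, normSq_apply, mul_zero, mul_im, zero_add,
    norm_I, I_re, I_im, conj_im, mul_neg, sub_neg_eq_add, sub_self, add_zero, zero_sub, even_two,
    Even.neg_pow, neg_zero]
  ring

lemma ofReal_mul_ne_of_norm_le_one {s : ℝ} {z : ℂ} (hη : ∀ j, ‖η j‖ = 1) (hs0 : 0 ≤ s)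
    (hs1 : s < 1) (hz : ‖z‖ ≤ 1) (j : Fin n) : (s : ℂ) * z ≠ η j := by
  refine sub_ne_zero.1 (norm_pos_iff.1 (lt_of_lt_of_le ?_
    (one_sub_mul_norm_le_norm_mul_sub (hη j) hs0)))
  nlinarith [norm_nonneg z]

lemma one_sub_sq_mul_sum_le {s : ℝ} {z : ℂ} (hη : ∀ j, ‖η j‖ = 1) (hs0 : 0 ≤ s) (hs1 : s ≤ 1)
    (hz : ‖z‖ ≤ 1) :
    (1 - ‖z‖ ^ 2) * ∑ j, |q j| * ‖s * z - η j‖⁻¹ ≤ 2 * ∑ j, |q j| := by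
  rw [Finset.mul_sum, Finset.mul_sum]
  refine Finset.sum_le_sum fun j _ => ?_
  have hdist : 1 - ‖z‖ ≤ ‖s * z - η j‖ :=
    le_trans (by nlinarith [norm_nonneg z]) (one_sub_mul_norm_le_norm_mul_sub (hη j) hs0)
  have hratio : (1 - ‖z‖ ^ 2) * ‖s * z - η j‖⁻¹ ≤ 2 := by
    rcases (norm_nonneg (s * z - η j)).eq_or_lt with hzero | hpos
    · simp [← hzero]
    · rw [← div_eq_mul_inv, div_le_iff₀ hpos]; nlinarith [norm_nonneg z]
  calc (1 - ‖z‖ ^ 2) * (|q j| * ‖s * z - η j‖⁻¹)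
      = |q j| * ((1 - ‖z‖ ^ 2) * ‖s * z - η j‖⁻¹) := by ring
    _ ≤ |q j| * 2 := mul_le_mul_of_nonneg_left hratio (abs_nonneg _)
    _ = 2 * |q j| := mul_comm _ _

lemma lap_weight_le {s : ℝ} {z : ℂ} (hη : ∀ j, ‖η j‖ = 1) (hs0 : 0 ≤ s) (hs1 : s < 1)
    (hz : ‖z‖ ≤ 1) :
    lap (fun w => (1 - ‖w‖ ^ 2) * Rabs η q (s * w) ^ 2) z ≤
      8 * ((∑ j, |q j|) + 1) * ((∑ j, |q j| * ‖s * z - η j‖⁻¹) * Rabs η q (s * z) ^ 2) := by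
  rw [lap_weight_eq (ofReal_mul_ne_of_norm_le_one hη hs0 hs1 hz)]
  set H := RlogDeriv η q (s * z)
  set γ := ∑ j, |q j| * ‖s * z - η j‖⁻¹
  have hH : ‖H‖ ≤ γ := norm_RlogDeriv_le _
  have hγ : 0 ≤ γ := (norm_nonneg _).trans hH
  have hz2 : 0 ≤ 1 - ‖z‖ ^ 2 := by nlinarith [norm_nonneg z]
  have hzH : -(z * H).re ≤ γ := by
    refine (neg_le_abs _).trans ((Complex.abs_re_le_norm _).trans ?_)
    rw [norm_mul]
    nlinarith [norm_nonneg H, norm_nonneg z]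
  have hγH : (1 - ‖z‖ ^ 2) * ‖H‖ ^ 2 ≤ 2 * (∑ j, |q j|) * γ :=
    calc (1 - ‖z‖ ^ 2) * ‖H‖ ^ 2 ≤ ((1 - ‖z‖ ^ 2) * γ) * γ := by
          rw [mul_assoc, ← sq]; gcongr
      _ ≤ (2 * ∑ j, |q j|) * γ :=
          mul_le_mul_of_nonneg_right (one_sub_sq_mul_sum_le hη hs0 hs1.le hz) hγ
  have hcross : s * -(z * H).re ≤ γ :=
    (mul_le_mul_of_nonneg_left hzH hs0).trans (mul_le_of_le_one_left hγ hs1.le)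
  have hsquare : s ^ 2 * ((1 - ‖z‖ ^ 2) * ‖H‖ ^ 2) ≤ 2 * (∑ j, |q j|) * γ :=
    (mul_le_of_le_one_left (by positivity) (by nlinarith)).trans hγH
  have hbracket : -4 - 8 * s * (z * H).re + 4 * s ^ 2 * (1 - ‖z‖ ^ 2) * ‖H‖ ^ 2 ≤
      8 * ((∑ j, |q j|) + 1) * γ := by
    linarith
  calc Rabs η q (s * z) ^ 2 * (-4 - 8 * s * (z * H).re + 4 * s ^ 2 * (1 - ‖z‖ ^ 2) * ‖H‖ ^ 2)
      ≤ Rabs η q (s * z) ^ 2 * (8 * ((∑ j, |q j|) + 1) * γ) := by gcongr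
    _ = 8 * ((∑ j, |q j|) + 1) * (γ * Rabs η q (s * z) ^ 2) := by ring

end Weight

theorem stmt_6_general {n : ℕ} (η : Fin n → ℂ) (hη : ∀ j, ‖η j‖ = 1)
    (q : Fin n → ℝ)
    (f : ℂ → ℂ) (hf : DifferentiableOn ℂ f (ball 0 1))
    (s : ℝ) (hs0 : 0 ≤ s) (hs1 : s < 1) :
    (∫ z in ball (0 : ℂ) 1,
        logPlus (‖f ((s : ℂ) * z)‖) *
          lap (fun w => (1 - ‖w‖ ^ 2) * (Rabs η q ((s : ℂ) * w)) ^ 2) z) +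
      (2 * ∫ θ in (0 : ℝ)..(2 * Real.pi),
        (Rabs η q ((s : ℂ) * Complex.exp ((θ : ℂ) * Complex.I))) ^ 2 *
          logPlus (‖f ((s : ℂ) * Complex.exp ((θ : ℂ) * Complex.I))‖))
      ≤ 8 * ((∑ j, |q j|) + 1) *
          (∫ z in ball (0 : ℂ) 1,
            (∑ j, |q j| * (‖(s : ℂ) * z - η j‖)⁻¹) * (Rabs η q ((s : ℂ) * z)) ^ 2 *
              logPlus (‖f ((s : ℂ) * z)‖)) +
        (2 * ∫ θ in (0 : ℝ)..(2 * Real.pi),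
        (Rabs η q ((s : ℂ) * Complex.exp ((θ : ℂ) * Complex.I))) ^ 2 *
          logPlus (‖f ((s : ℂ) * Complex.exp ((θ : ℂ) * Complex.I))‖)) := by
  have hK : MapsTo (fun z : ℂ => (s : ℂ) * z) (closedBall 0 1) {x | ∀ j, x ≠ η j} :=
    fun z hz => ofReal_mul_ne_of_norm_le_one hη hs0 hs1 (mem_closedBall_zero_iff.1 hz)
  have hball : MapsTo (fun z : ℂ => (s : ℂ) * z) (closedBall 0 1) (ball 0 1) := fun z hz => by
    rw [mem_closedBall_zero_iff] at hz
    rw [mem_ball_zero_iff, norm_mul, Complex.norm_real, Real.norm_of_nonneg hs0]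
    nlinarith [norm_nonneg z]
  have hL : ContinuousOn (fun z : ℂ => logPlus ‖f (s * z)‖) (closedBall 0 1) := by
    rw [logPlus_eq_posLog]
    exact Real.continuous_posLog.comp_continuousOn (hf.continuousOn.comp (by fun_prop) hball).norm
  have hR : ContinuousOn (fun z : ℂ => Rabs η q (s * z)) (closedBall 0 1) :=
    continuousOn_Rabs.comp (by fun_prop) hK
  have hH : ContinuousOn (fun z : ℂ => RlogDeriv η q (s * z)) (closedBall 0 1) :=
    continuousOn_RlogDeriv.comp (by fun_prop) hK
  have hγ : ContinuousOn (fun z : ℂ => ∑ j, |q j| * ‖(s : ℂ) * z - η j‖⁻¹) (closedBall 0 1) :=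
    continuousOn_sum_abs_mul_inv_norm_sub.comp (by fun_prop) hK
  refine add_le_add_left ?_ _
  rw [← integral_const_mul]
  refine setIntegral_mono_on ?_ ?_ measurableSet_ball fun z hz => ?_
  · refine IntegrableOn.congr_fun ?_ (fun z hz => by
      rw [lap_weight_eq (hK (ball_subset_closedBall hz))]) measurableSet_ball
    exact ContinuousOn.integrableOn_ball (by fun_prop)
  · exact ContinuousOn.integrableOn_ball (by fun_prop)
  · calc logPlus ‖f (s * z)‖ * lap (fun w => (1 - ‖w‖ ^ 2) * Rabs η q (s * w) ^ 2) z
        ≤ logPlus ‖f (s * z)‖ * (8 * ((∑ j, |q j|) + 1) *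
            ((∑ j, |q j| * ‖s * z - η j‖⁻¹) * Rabs η q (s * z) ^ 2)) :=
          mul_le_mul_of_nonneg_left
            (lap_weight_le hη hs0 hs1 (mem_closedBall_zero_iff.1 (ball_subset_closedBall hz)))
            (le_max_right _ _)
      _ = _ := by ring

theorem stmt_6 {n : ℕ} (η : Fin n → ℂ) (hη : ∀ j, ‖η j‖ = 1)
    (hinj : Function.Injective η) (q : Fin n → ℝ)
    (f : ℂ → ℂ) (hf : DifferentiableOn ℂ f (ball 0 1))
    (s : ℝ) (hs0 : 0 ≤ s) (hs1 : s < 1) :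
    (∫ z in ball (0 : ℂ) 1,
        logPlus (‖f ((s : ℂ) * z)‖) *
          lap (fun w => (1 - ‖w‖ ^ 2) * (Rabs η q ((s : ℂ) * w)) ^ 2) z) +
      (2 * ∫ θ in (0 : ℝ)..(2 * Real.pi),
        (Rabs η q ((s : ℂ) * Complex.exp ((θ : ℂ) * Complex.I))) ^ 2 *
          logPlus (‖f ((s : ℂ) * Complex.exp ((θ : ℂ) * Complex.I))‖))
      ≤ 8 * ((∑ j, |q j|) + 1) *
          (∫ z in ball (0 : ℂ) 1,
            (∑ j, |q j| * (‖(s : ℂ) * z - η j‖)⁻¹) * (Rabs η q ((s : ℂ) * z)) ^ 2 *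
              logPlus (‖f ((s : ℂ) * z)‖)) +
        (2 * ∫ θ in (0 : ℝ)..(2 * Real.pi),
        (Rabs η q ((s : ℂ) * Complex.exp ((θ : ℂ) * Complex.I))) ^ 2 *
          logPlus (‖f ((s : ℂ) * Complex.exp ((θ : ℂ) * Complex.I))‖)) :=
  stmt_6_general η hη q f hf s hs0 hs1
end
end

section
/- Suppose the holomorphic function f on 𝔻 satisfies |f(z)| ≤ exp(D/|R(z)|) for all z ∈ 𝔻, where D > 0. For ε > 0 set |R_ε(z)| := ∏_{j=1}^n |z − η_j|^{q_j − 1 + ε}. Then for every ε > 0 there is a constant C(α,ε), depending only on ε and on the minimal separation α > 0 of the points η_1,…,η_n on 𝕋, such that sup_{0 ≤ s < 1} ∫_𝕋 |R_ε(se^{iθ})| log⁺|f(se^{iθ})| dθ ≤ D · C(α,ε). -/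
/-!
Since `log⁺ |f| ≤ D / |R|`, the integrand is at most `D ∏ⱼ |z - ηⱼ| ^ (ε - 1)`. By the
separation of the `ηⱼ`, at every `z` all factors but the one of the point nearest to `z` are
bounded by a constant depending only on `α` and `ε`, so the product is at most
`1 + const · ∑ⱼ |z - ηⱼ| ^ (ε - 1)`. Each `∫ |s e^{iθ} - ηⱼ| ^ (ε - 1) dθ` is bounded uniformly
in `s < 1`: rotating `ηⱼ` to `1`, the chord estimate `|s e^{iu} - 1| ≥ |u| / π` on `[-π, π]`
dominates it by `π ^ (1 - ε) ∫ |u| ^ (ε - 1) du = 2π / ε` when `ε < 1`, and for `ε ≥ 1` the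
integrand is simply bounded by `2 ^ (ε - 1)`.
-/

open MeasureTheory Metric Complex Set ENNReal
open scoped Classical

noncomputable section

open intervalIntegral
open scoped Real

lemma norm_circleMap_zero_sub_one_ge {s u : ℝ} (hs0 : 0 ≤ s) (hu : |u| ≤ π) :
    |u| / π ≤ ‖circleMap 0 s u - 1‖ := by
  have hsq : ‖circleMap 0 s u - 1‖ ^ 2 = s ^ 2 - 2 * s * Real.cos u + 1 := by
    rw [circleMap_zero, Complex.exp_mul_I, ← Complex.ofReal_cos, ← Complex.ofReal_sin,
      Complex.sq_norm, show (s : ℂ) * (Real.cos u + Real.sin u * Complex.I) - 1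
        = ((s * Real.cos u - 1 : ℝ) : ℂ) + ((s * Real.sin u : ℝ) : ℂ) * Complex.I by
          push_cast; ring, Complex.normSq_add_mul_I]
    nlinarith [Real.sin_sq_add_cos_sq u]
  -- `s² - 2 s cos u + 1 = (s - cos u)² + sin² u`, and it is `≥ 1` when `cos u ≤ 0`
  have hcos_le : (1 - Real.cos u) / 2 ≤ ‖circleMap 0 s u - 1‖ ^ 2 := by
    nlinarith [sq_nonneg (s - Real.cos u), Real.cos_le_one u, Real.neg_one_le_cos u]
  have hjordan : Real.cos u ≤ 1 - 2 / π ^ 2 * u ^ 2 := Real.cos_le_one_sub_mul_cos_sq hu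
  have hsq_le : (|u| / π) ^ 2 ≤ ‖circleMap 0 s u - 1‖ ^ 2 := by
    have hπ2 : 2 / π ^ 2 * u ^ 2 = 2 * (|u| / π) ^ 2 := by rw [div_pow, sq_abs]; ring
    linarith
  exact (pow_le_pow_iff_left₀ (by positivity) (norm_nonneg _) two_ne_zero).mp hsq_le

lemma circleMap_zero_ne_of_lt_norm {s : ℝ} {η : ℂ} (hs : |s| < ‖η‖) (θ : ℝ) :
    circleMap 0 s θ ≠ η := fun h => by
  have := norm_circleMap_zero s θ
  rw [h] at this
  linarith

lemma continuous_norm_circleMap_zero_sub_rpow {s : ℝ} {η : ℂ} (hs : |s| < ‖η‖) (r : ℝ) :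
    Continuous fun θ => ‖circleMap 0 s θ - η‖ ^ r :=
  ((continuous_circleMap 0 s).sub continuous_const).norm.rpow_const fun θ =>
    Or.inl (norm_ne_zero_iff.2 (sub_ne_zero.2 (circleMap_zero_ne_of_lt_norm hs θ)))

lemma norm_circleMap_zero_neg_sub_one (s u : ℝ) :
    ‖circleMap 0 s (-u) - 1‖ = ‖circleMap 0 s u - 1‖ := by
  rw [← conj_circleMap_zero, ← Complex.norm_conj, map_sub, Complex.conj_conj, map_one]

lemma norm_circleMap_zero_sub_circleMap (s θ θ₀ : ℝ) :
    ‖circleMap 0 s θ - circleMap 0 1 θ₀‖ = ‖circleMap 0 s (θ - θ₀) - 1‖ := by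
  have : circleMap 0 s θ - circleMap 0 1 θ₀ = circleMap 0 1 θ₀ * (circleMap 0 s (θ - θ₀) - 1) := by
    rw [mul_sub, circleMap_zero_mul, mul_one, one_mul, add_sub_cancel]
  rw [this, norm_mul, norm_circleMap_zero, abs_one, one_mul]

section SingularIntegral

variable {s ε : ℝ}

lemma integral_norm_circleMap_zero_sub_one_rpow_le (hs0 : 0 ≤ s) (hs1 : s < 1) (hε : 0 < ε)
    (hε1 : ε < 1) :
    ∫ u in (0 : ℝ)..π, ‖circleMap 0 s u - 1‖ ^ (ε - 1) ≤ π / ε := by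
  have hs : |s| < ‖(1 : ℂ)‖ := by rwa [norm_one, abs_of_nonneg hs0]
  calc ∫ u in (0 : ℝ)..π, ‖circleMap 0 s u - 1‖ ^ (ε - 1)
      ≤ ∫ u in (0 : ℝ)..π, π ^ (1 - ε) * u ^ (ε - 1) := by
        refine integral_mono_on_of_le_Ioo Real.pi_pos.le
          ((continuous_norm_circleMap_zero_sub_rpow hs _).intervalIntegrable _ _)
          ((intervalIntegrable_rpow' (by linarith)).const_mul _) fun u hu => ?_
        have hchord := norm_circleMap_zero_sub_one_ge hs0
          (abs_le.2 ⟨by linarith [hu.1, Real.pi_pos], hu.2.le⟩)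
        rw [abs_of_pos hu.1] at hchord
        calc ‖circleMap 0 s u - 1‖ ^ (ε - 1) ≤ (u / π) ^ (ε - 1) :=
              Real.rpow_le_rpow_of_nonpos (div_pos hu.1 Real.pi_pos) hchord (by linarith)
          _ = π ^ (1 - ε) * u ^ (ε - 1) := by
              rw [Real.div_rpow hu.1.le Real.pi_pos.le, div_eq_mul_inv,
                ← Real.rpow_neg Real.pi_pos.le, mul_comm, neg_sub]
    _ = π / ε := by
        rw [intervalIntegral.integral_const_mul, integral_rpow (Or.inl (by linarith)),
          sub_add_cancel, Real.zero_rpow hε.ne', sub_zero, mul_div_assoc',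
          ← Real.rpow_add Real.pi_pos, sub_add_cancel, Real.rpow_one]

lemma integral_norm_circleMap_zero_sub_rpow_le_of_lt_one (hs0 : 0 ≤ s) (hs1 : s < 1) (hε : 0 < ε)
    (hε1 : ε < 1) {η : ℂ} (hη : ‖η‖ = 1) :
    ∫ θ in (0 : ℝ)..2 * π, ‖circleMap 0 s θ - η‖ ^ (ε - 1) ≤ 2 * π / ε := by
  set F : ℝ → ℝ := fun u => ‖circleMap 0 s u - 1‖ ^ (ε - 1)
  have hs : |s| < ‖(1 : ℂ)‖ := by rwa [norm_one, abs_of_nonneg hs0]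
  have hF : Continuous F := continuous_norm_circleMap_zero_sub_rpow hs _
  obtain ⟨θ₀, rfl⟩ : ∃ θ₀, circleMap 0 1 θ₀ = η :=
    ⟨η.arg, by rw [circleMap_zero]; conv_rhs => rw [← Complex.norm_mul_exp_arg_mul_I η, hη]⟩
  have hrot :
      (fun θ => ‖circleMap 0 s θ - circleMap 0 1 θ₀‖ ^ (ε - 1)) = fun θ => F (θ - θ₀) := by
    ext θ; rw [norm_circleMap_zero_sub_circleMap]
  have hper : Function.Periodic (fun θ => F (θ - θ₀)) (2 * π) :=
    ((periodic_circleMap 0 s).comp fun z => ‖z - 1‖ ^ (ε - 1)).sub_const θ₀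
  calc ∫ θ in (0 : ℝ)..2 * π, ‖circleMap 0 s θ - circleMap 0 1 θ₀‖ ^ (ε - 1)
      = ∫ θ in (θ₀ - π)..(θ₀ - π) + 2 * π, F (θ - θ₀) := by
        rw [hrot, ← hper.intervalIntegral_add_eq 0 (θ₀ - π), zero_add]
    _ = ∫ u in (-π)..π, F u := by rw [integral_comp_sub_right]; ring_nf
    _ = 2 * ∫ u in (0 : ℝ)..π, F u := by
        rw [← integral_add_adjacent_intervals (b := 0) (hF.intervalIntegrable _ _)
          (hF.intervalIntegrable _ _), two_mul]
        congr 1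
        simpa [F, norm_circleMap_zero_neg_sub_one] using
          (integral_comp_neg (a := 0) (b := π) F).symm
    _ ≤ 2 * π / ε := by
        rw [mul_div_assoc]
        exact mul_le_mul_of_nonneg_left
          (integral_norm_circleMap_zero_sub_one_rpow_le hs0 hs1 hε hε1) two_pos.le

end SingularIntegral

lemma norm_circleMap_zero_sub_le_two {s : ℝ} {η : ℂ} (hs : |s| ≤ 1) (hη : ‖η‖ = 1) (θ : ℝ) :
    ‖circleMap 0 s θ - η‖ ≤ 2 := by
  linarith [norm_sub_le (circleMap 0 s θ) η, norm_circleMap_zero s θ]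

lemma exists_integral_norm_circleMap_zero_sub_rpow_le {ε : ℝ} (hε : 0 < ε) :
    ∃ B, 0 ≤ B ∧ ∀ s, 0 ≤ s → s < 1 → ∀ η : ℂ, ‖η‖ = 1 →
      ∫ θ in (0 : ℝ)..2 * π, ‖circleMap 0 s θ - η‖ ^ (ε - 1) ≤ B := by
  rcases lt_or_ge ε 1 with hε1 | hε1
  · exact ⟨2 * π / ε, by positivity, fun s hs0 hs1 η hη =>
      integral_norm_circleMap_zero_sub_rpow_le_of_lt_one hs0 hs1 hε hε1 hη⟩
  refine ⟨2 * π * 2 ^ (ε - 1), by positivity, fun s hs0 hs1 η hη => ?_⟩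
  have hs : |s| < ‖η‖ := by rw [hη, abs_of_nonneg hs0]; exact hs1
  calc ∫ θ in (0 : ℝ)..2 * π, ‖circleMap 0 s θ - η‖ ^ (ε - 1)
      ≤ ∫ θ in (0 : ℝ)..2 * π, (2 : ℝ) ^ (ε - 1) :=
        integral_mono_on Real.two_pi_pos.le
          ((continuous_norm_circleMap_zero_sub_rpow hs _).intervalIntegrable _ _)
          intervalIntegrable_const fun θ _ => Real.rpow_le_rpow (norm_nonneg _)
            (norm_circleMap_zero_sub_le_two (hs.le.trans_eq hη) hη θ) (by linarith)
    _ = 2 * π * 2 ^ (ε - 1) := by simp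

lemma Real.rpow_le_max_of_mem_Icc {a b x : ℝ} (ha : 0 < a) (hx : x ∈ Icc a b) (r : ℝ) :
    x ^ r ≤ max (a ^ r) (b ^ r) := by
  rcases le_total 0 r with hr | hr
  · exact (Real.rpow_le_rpow (ha.le.trans hx.1) hx.2 hr).trans (le_max_right _ _)
  · exact (Real.rpow_le_rpow_of_nonpos ha hx.1 hr).trans (le_max_left _ _)

lemma half_le_norm_sub_of_norm_sub_le {E : Type*} [SeminormedAddCommGroup E] {a b z : E} {α : ℝ}
    (hab : α ≤ ‖a - b‖) (h : ‖z - a‖ ≤ ‖z - b‖) : α / 2 ≤ ‖z - b‖ := by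
  linarith [norm_sub_le_norm_sub_add_norm_sub a z b, norm_sub_rev a z]

lemma Finset.prod_le_pow_mul_sum_of_le_of_ne {ι : Type*} [DecidableEq ι] {s : Finset ι}
    {f : ι → ℝ} {i : ι} {K : ℝ} (hf : ∀ j ∈ s, 0 ≤ f j) (hi : i ∈ s) (hK0 : 0 ≤ K)
    (hK : ∀ j ∈ s, j ≠ i → f j ≤ K) :
    ∏ j ∈ s, f j ≤ K ^ (s.card - 1) * ∑ j ∈ s, f j := by
  rw [← mul_prod_erase s f hi]
  calc f i * ∏ j ∈ s.erase i, f j ≤ f i * ∏ _j ∈ s.erase i, K :=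
        mul_le_mul_of_nonneg_left (prod_le_prod (fun j hj => hf j (mem_of_mem_erase hj))
          fun j hj => hK j (mem_of_mem_erase hj) (ne_of_mem_erase hj)) (hf i hi)
    _ ≤ K ^ (s.card - 1) * ∑ j ∈ s, f j := by
        rw [prod_const, card_erase_of_mem hi, mul_comm]
        exact mul_le_mul_of_nonneg_left (single_le_sum hf hi) (pow_nonneg hK0 _)

lemma Rabs_const_le_one_add_sum {n : ℕ} {η : Fin n → ℂ} {α : ℝ} (hα : 0 < α)
    (hsep : ∀ j k, j ≠ k → α ≤ ‖η j - η k‖) {z : ℂ} (hz : ∀ j, ‖z - η j‖ ≤ 2) (r : ℝ) :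
    Rabs η (fun _ => r) z ≤ 1 + max ((α / 2) ^ r) (2 ^ r) ^ (n - 1) * ∑ j, ‖z - η j‖ ^ r := by
  rcases isEmpty_or_nonempty (Fin n) with hn | hn
  · simp [Rabs]
  -- only the point `η i` closest to `z` can be closer than `α / 2`
  obtain ⟨i, -, hi⟩ :=
    Finset.exists_min_image Finset.univ (fun j => ‖z - η j‖) Finset.univ_nonempty
  have hprod := Finset.prod_le_pow_mul_sum_of_le_of_ne
    (fun j _ => Real.rpow_nonneg (norm_nonneg _) r) (Finset.mem_univ i)
    (le_max_of_le_right (by positivity))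
    fun j _ hji => Real.rpow_le_max_of_mem_Icc (half_pos hα)
      ⟨half_le_norm_sub_of_norm_sub_le (hsep i j hji.symm) (hi j (Finset.mem_univ j)), hz j⟩ r
  rw [Finset.card_univ, Fintype.card_fin] at hprod
  unfold Rabs
  linarith

lemma continuous_Rabs_circleMap {n : ℕ} {η : Fin n → ℂ} {s : ℝ} (hs : ∀ j, |s| < ‖η j‖)
    (q : Fin n → ℝ) : Continuous fun θ => Rabs η q (circleMap 0 s θ) :=
  continuous_finsetProd _ fun j _ => continuous_norm_circleMap_zero_sub_rpow (hs j) _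

lemma exists_integral_Rabs_const_circleMap_le (n : ℕ) {ε α : ℝ} (hε : 0 < ε) (hα : 0 < α) :
    ∃ C, 0 < C ∧ ∀ η : Fin n → ℂ, (∀ j, ‖η j‖ = 1) → (∀ j k, j ≠ k → α ≤ ‖η j - η k‖) →
      ∀ s, 0 ≤ s → s < 1 →
        ∫ θ in (0 : ℝ)..2 * π, Rabs η (fun _ => ε - 1) (circleMap 0 s θ) ≤ C := by
  obtain ⟨B, hB0, hB⟩ := exists_integral_norm_circleMap_zero_sub_rpow_le hε
  set K := max ((α / 2) ^ (ε - 1)) (2 ^ (ε - 1))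
  refine ⟨2 * π + K ^ (n - 1) * (n * B), by positivity, fun η hη hsep s hs0 hs1 => ?_⟩
  have hs : ∀ j, |s| < ‖η j‖ := fun j => by rw [hη j, abs_of_nonneg hs0]; exact hs1
  have hcont : ∀ j, Continuous fun θ => ‖circleMap 0 s θ - η j‖ ^ (ε - 1) :=
    fun j => continuous_norm_circleMap_zero_sub_rpow (hs j) _
  have hsum : Continuous fun θ => K ^ (n - 1) * ∑ j, ‖circleMap 0 s θ - η j‖ ^ (ε - 1) :=
    continuous_const.mul (continuous_finsetSum _ fun j _ => hcont j)
  calc ∫ θ in (0 : ℝ)..2 * π, Rabs η (fun _ => ε - 1) (circleMap 0 s θ)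
      ≤ ∫ θ in (0 : ℝ)..2 * π, 1 + K ^ (n - 1) * ∑ j, ‖circleMap 0 s θ - η j‖ ^ (ε - 1) :=
        integral_mono_on Real.two_pi_pos.le
          ((continuous_Rabs_circleMap hs _).intervalIntegrable _ _)
          (intervalIntegrable_const.add (hsum.intervalIntegrable _ _))
          fun θ _ => Rabs_const_le_one_add_sum hα hsep
            (fun j => norm_circleMap_zero_sub_le_two ((hs j).le.trans_eq (hη j)) (hη j) θ) _
    _ = 2 * π + K ^ (n - 1) * ∑ j, ∫ θ in (0 : ℝ)..2 * π, ‖circleMap 0 s θ - η j‖ ^ (ε - 1) := by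
        rw [integral_add intervalIntegrable_const (hsum.intervalIntegrable _ _),
          intervalIntegral.integral_const_mul,
          integral_finsetSum fun j _ => (hcont j).intervalIntegrable _ _]
        simp
    _ ≤ 2 * π + K ^ (n - 1) * (n * B) := by
        gcongr
        simpa using Finset.sum_le_card_nsmul Finset.univ _ _ fun j _ => hB s hs0 hs1 (η j) (hη j)

lemma Rabs_pos {n : ℕ} {η : Fin n → ℂ} {z : ℂ} (hz : ∀ j, z ≠ η j) (q : Fin n → ℝ) :
    0 < Rabs η q z :=
  Finset.prod_pos fun j _ => Real.rpow_pos_of_pos (norm_pos_iff.2 (sub_ne_zero.2 (hz j))) _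

lemma Rabs_add {n : ℕ} {η : Fin n → ℂ} {z : ℂ} (hz : ∀ j, z ≠ η j) (q p : Fin n → ℝ) :
    Rabs η (q + p) z = Rabs η q z * Rabs η p z := by
  simp only [Rabs, Pi.add_apply, ← Finset.prod_mul_distrib]
  exact Finset.prod_congr rfl fun j _ =>
    Real.rpow_add (norm_pos_iff.2 (sub_ne_zero.2 (hz j))) _ _

lemma logPlus_le_of_le_exp {x t : ℝ} (hx0 : 0 ≤ x) (ht : 0 ≤ t) (hx : x ≤ Real.exp t) :
    logPlus x ≤ t := by
  refine max_le ?_ ht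
  rcases hx0.eq_or_lt with rfl | hx0
  · rwa [Real.log_zero]
  · exact (Real.log_le_iff_le_exp hx0).2 hx

lemma Rabs_add_mul_logPlus_le {n : ℕ} {η : Fin n → ℂ} {z : ℂ} (hz : ∀ j, z ≠ η j)
    (q p : Fin n → ℝ) {D x : ℝ} (hD : 0 ≤ D) (hx0 : 0 ≤ x) (hx : x ≤ Real.exp (D / Rabs η q z)) :
    Rabs η (q + p) z * logPlus x ≤ D * Rabs η p z := by
  have hq := Rabs_pos hz q
  calc Rabs η (q + p) z * logPlus x ≤ Rabs η (q + p) z * (D / Rabs η q z) :=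
        mul_le_mul_of_nonneg_left (logPlus_le_of_le_exp hx0 (div_nonneg hD hq.le) hx)
          (Rabs_pos hz _).le
    _ = D * Rabs η p z := by rw [Rabs_add hz]; field_simp

theorem stmt_10 (n : ℕ) (ε : ℝ) (hε : 0 < ε) (α : ℝ) (hα : 0 < α) :
    ∃ C : ℝ, 0 < C ∧
      ∀ η : Fin n → ℂ, (∀ j, ‖η j‖ = 1) →
        (∀ j k, j ≠ k → α ≤ ‖η j - η k‖) →
      ∀ q : Fin n → ℝ, ∀ D : ℝ, 0 < D →
      ∀ f : ℂ → ℂ, DifferentiableOn ℂ f (ball 0 1) →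
        (∀ z ∈ ball (0 : ℂ) 1, ‖f z‖ ≤ Real.exp (D / Rabs η q z)) →
      ∀ s : ℝ, 0 ≤ s → s < 1 →
        (∫ θ in (0 : ℝ)..(2 * Real.pi),
            Rabs η (fun j => q j - 1 + ε) ((s : ℂ) * Complex.exp ((θ : ℂ) * Complex.I)) *
              logPlus ‖f ((s : ℂ) * Complex.exp ((θ : ℂ) * Complex.I))‖)
          ≤ D * C := by
  obtain ⟨C, hC, hbound⟩ := exists_integral_Rabs_const_circleMap_le n hε hα
  refine ⟨C, hC, fun η hη hsep q D hD f _ hf s hs0 hs1 => ?_⟩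
  have hmem : ∀ θ, circleMap 0 s θ ∈ ball (0 : ℂ) 1 := fun θ => by
    rw [mem_ball_zero_iff, norm_circleMap_zero, abs_of_nonneg hs0]; exact hs1
  have hs : ∀ j, |s| < ‖η j‖ := fun j => by rw [hη j, abs_of_nonneg hs0]; exact hs1
  have hne : ∀ θ j, circleMap 0 s θ ≠ η j := fun θ j => circleMap_zero_ne_of_lt_norm (hs j) θ
  have hexp : (fun j => q j - 1 + ε) = q + fun _ => ε - 1 := by ext; simp only [Pi.add_apply]; ring
  simp only [← circleMap_zero, hexp]
  calc _ ≤ ∫ θ in (0 : ℝ)..2 * π, D * Rabs η (fun _ => ε - 1) (circleMap 0 s θ) := by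
        rw [integral_of_le Real.two_pi_pos.le, integral_of_le Real.two_pi_pos.le]
        refine integral_mono_of_nonneg (ae_of_all _ fun θ => ?_)
          ((continuous_const.mul (continuous_Rabs_circleMap hs _)).integrableOn_Ioc)
          (ae_of_all _ fun θ => ?_)
        · exact mul_nonneg (Rabs_pos (hne θ) _).le (le_max_right _ _)
        · exact Rabs_add_mul_logPlus_le (hne θ) _ _ hD.le (norm_nonneg _) (hf _ (hmem θ))
    _ = D * ∫ θ in (0 : ℝ)..2 * π, Rabs η (fun _ => ε - 1) (circleMap 0 s θ) :=
        intervalIntegral.integral_const_mul _ _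
    _ ≤ D * C := mul_le_mul_of_nonneg_left (hbound η hη hsep s hs0 hs1) hD.le
end
end

section
/- Let φ be a continuous function on the unit disc 𝔻, let f be holomorphic on 𝔻 with |f(0)| = 1, and let 0 < t < 1. Then the function s ↦ ∫_𝕋 φ(se^{iθ}) log⁻|f(se^{iθ})| dθ is continuous on [0, t]. -/
open MeasureTheory Metric Complex Set ENNReal
open scoped Classical

noncomputable section

/-! By compactness of `closedBall 0 t` and the local factorisation `f z = (z - a) ^ m • g z`,
`g a ≠ 0`, one has `log⁻ ‖f z‖ ≤ C + ∑ m_a log⁻ ‖z - a‖` there, the sum running over the finitely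
many zeros `a` of `f` in the disc, none of which is `0`. The distance from `a` to the line
`ℝ e^{iθ}` is `‖a‖ |sin (arg a - θ)|`, so uniformly in the radius `s` the integrand is dominated by
`C' + ∑ m_a (log⁻ ‖a‖ + log⁻ |sin (arg a - θ)|)`, which is integrable in `θ`. Off a countable set of
`θ` the line misses every zero, so the integrand is continuous in `s`, and dominated convergence
applies. -/

lemma logMinus_eq_posLog_inv (x : ℝ) : logMinus x = Real.posLog x⁻¹ := by
  simp [logMinus, Real.posLog, Real.log_inv, max_comm]

lemma logMinus_nonneg (x : ℝ) : 0 ≤ logMinus x := le_max_right _ _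

@[simp] lemma logMinus_zero : logMinus 0 = 0 := by simp [logMinus]

@[simp] lemma logMinus_abs (x : ℝ) : logMinus |x| = logMinus x := by simp [logMinus]

lemma logMinus_mul_le (x y : ℝ) : logMinus (x * y) ≤ logMinus x + logMinus y := by
  simpa only [logMinus_eq_posLog_inv, mul_inv] using Real.posLog_mul

lemma logMinus_pow (n : ℕ) (x : ℝ) : logMinus (x ^ n) = n * logMinus x := by
  simp only [logMinus_eq_posLog_inv, ← inv_pow, Real.posLog_pow]

lemma logMinus_le_logMinus {x y : ℝ} (hx : 0 < x) (hxy : x ≤ y) : logMinus y ≤ logMinus x := by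
  simp only [logMinus_eq_posLog_inv]
  exact Real.posLog_le_posLog (inv_nonneg.2 (hx.le.trans hxy)) (inv_anti₀ hx hxy)

lemma logMinus_eq_neg_log {x : ℝ} (hx : |x| ≤ 1) : logMinus x = -Real.log x := by
  rw [← logMinus_abs, ← Real.log_abs]
  exact max_eq_left (neg_nonneg.2 (Real.log_nonpos (abs_nonneg x) hx))

lemma continuousAt_logMinus {x : ℝ} (hx : x ≠ 0) : ContinuousAt logMinus x :=
  (Real.continuousAt_log hx).neg.max continuousAt_const

lemma logMinus_pow_mul_le {x y c : ℝ} (hx : 0 ≤ x) (hc : 0 < c) (hcy : c ≤ y) (n : ℕ) :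
    logMinus (x ^ n * y) ≤ logMinus c + n * logMinus x := by
  rcases (pow_nonneg hx n).eq_or_lt with h | h
  · rw [← h, zero_mul, logMinus_zero]
    exact add_nonneg (logMinus_nonneg c) (mul_nonneg n.cast_nonneg (logMinus_nonneg x))
  calc logMinus (x ^ n * y) ≤ logMinus (x ^ n * c) :=
        logMinus_le_logMinus (mul_pos h hc) (mul_le_mul_of_nonneg_left hcy h.le)
    _ ≤ logMinus (x ^ n) + logMinus c := logMinus_mul_le _ _
    _ = logMinus c + n * logMinus x := by rw [logMinus_pow, add_comm]

lemma intervalIntegrable_logMinus_sin_sub (c a b : ℝ) :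
    IntervalIntegrable (fun θ => logMinus (Real.sin (c - θ))) volume a b := by
  have h : IntervalIntegrable (fun θ => Real.log (Real.sin (c - θ))) volume a b := by
    simpa using (intervalIntegrable_log_sin (a := c - a) (b := c - b)).comp_sub_left c
  refine h.neg.congr fun θ _ => ?_
  exact (logMinus_eq_neg_log (Real.abs_sin_le_one _)).symm

lemma ae_sin_sub_ne_zero (c : ℝ) : ∀ᵐ θ : ℝ, Real.sin (c - θ) ≠ 0 := by
  refine measure_mono_null (fun θ hθ => ?_)
    ((countable_range fun n : ℤ => c - n * Real.pi).measure_zero volume)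
  obtain ⟨n, hn⟩ := Real.sin_eq_zero_iff.mp (not_not.mp hθ)
  exact ⟨n, by simp only; linarith⟩

lemma norm_mul_abs_sin_arg_sub_le (a : ℂ) (s θ : ℝ) :
    ‖a‖ * |Real.sin (arg a - θ)| ≤ ‖(s : ℂ) * exp (θ * I) - a‖ := by
  have hrot : ((s : ℂ) * exp (θ * I) - a) * exp ((-θ : ℝ) * I) =
      s - ‖a‖ * exp ((arg a - θ : ℝ) * I) := by
    conv_lhs => rw [← norm_mul_exp_arg_mul_I a]
    rw [sub_mul, mul_assoc, mul_assoc, ← exp_add, ← exp_add]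
    push_cast
    ring_nf
    simp
  calc ‖a‖ * |Real.sin (arg a - θ)| = |((s : ℂ) - ‖a‖ * exp ((arg a - θ : ℝ) * I)).im| := by
        rw [sub_im, ofReal_im, im_ofReal_mul, exp_ofReal_mul_I_im, zero_sub, abs_neg, abs_mul,
          abs_norm]
    _ ≤ ‖(s : ℂ) - ‖a‖ * exp ((arg a - θ : ℝ) * I)‖ := abs_im_le_norm _
    _ = ‖(s : ℂ) * exp (θ * I) - a‖ := by rw [← hrot, norm_mul, norm_exp_ofReal_mul_I, mul_one]

lemma ofReal_mul_exp_ne_of_sin_arg_sub_ne_zero {a : ℂ} (ha : a ≠ 0) (s : ℝ) {θ : ℝ}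
    (hθ : Real.sin (arg a - θ) ≠ 0) : (s : ℂ) * exp (θ * I) ≠ a := by
  intro h
  have := norm_mul_abs_sin_arg_sub_le a s θ
  rw [h, sub_self, norm_zero] at this
  exact (mul_pos (norm_pos_iff.2 ha) (abs_pos.2 hθ)).not_ge this

lemma logMinus_norm_ofReal_mul_exp_sub_le {a : ℂ} (ha : a ≠ 0) (s : ℝ) {θ : ℝ}
    (hθ : Real.sin (arg a - θ) ≠ 0) :
    logMinus ‖(s : ℂ) * exp (θ * I) - a‖ ≤ logMinus ‖a‖ + logMinus (Real.sin (arg a - θ)) := by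
  calc logMinus ‖(s : ℂ) * exp (θ * I) - a‖ ≤ logMinus (‖a‖ * |Real.sin (arg a - θ)|) :=
        logMinus_le_logMinus (mul_pos (norm_pos_iff.2 ha) (abs_pos.2 hθ))
          (norm_mul_abs_sin_arg_sub_le a s θ)
    _ ≤ logMinus ‖a‖ + logMinus (Real.sin (arg a - θ)) := by
        simpa using logMinus_mul_le ‖a‖ |Real.sin (arg a - θ)|

section Analytic

variable {𝕜 E : Type*} [NontriviallyNormedField 𝕜] [NormedAddCommGroup E] [NormedSpace 𝕜 E]
  {f : 𝕜 → E}

open Filter Topology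

/-- Near a point of finite order `m`, `‖f z‖ ≥ c ‖z - a‖ ^ m`; in logarithmic form. -/
lemma AnalyticAt.exists_logMinus_norm_le {a : 𝕜} (hf : AnalyticAt 𝕜 f a)
    (hfa : analyticOrderAt f a ≠ ⊤) :
    ∃ r > 0, ∃ C : ℝ, ∃ m : ℕ, 0 ≤ C ∧ (f a ≠ 0 → m = 0) ∧
      ∀ z ∈ ball a r, (f z = 0 → z = a) ∧ logMinus ‖f z‖ ≤ C + m * logMinus ‖z - a‖ := by
  obtain ⟨g, hg, hga, hfg⟩ := hf.analyticOrderAt_ne_top.1 hfa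
  set m := analyticOrderNatAt f a
  have hg_large : ∀ᶠ z in 𝓝 a, ‖g a‖ / 2 < ‖g z‖ :=
    hg.continuousAt.norm.eventually (lt_mem_nhds (half_lt_self (norm_pos_iff.2 hga)))
  obtain ⟨r, hr, hball⟩ := Metric.eventually_nhds_iff_ball.1 (hfg.and hg_large)
  refine ⟨r, hr, logMinus (‖g a‖ / 2), m, logMinus_nonneg _, fun hfa0 => ?_, fun z hz => ?_⟩
  · by_contra hm
    exact hfa0 (by simp [hfg.self_of_nhds, zero_pow hm])
  obtain ⟨hfz, hgz⟩ := hball z hz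
  have hgz0 : g z ≠ 0 := norm_pos_iff.1 ((half_pos (norm_pos_iff.2 hga)).trans hgz)
  refine ⟨fun h0 => ?_, ?_⟩
  · rw [hfz, smul_eq_zero, or_iff_left hgz0, pow_eq_zero_iff', sub_eq_zero] at h0
    exact h0.1
  · rw [hfz, norm_smul, norm_pow]
    exact logMinus_pow_mul_le (norm_nonneg _) (half_pos (norm_pos_iff.2 hga)) hgz.le m

lemma IsCompact.exists_logMinus_norm_le {K : Set 𝕜} (hK : IsCompact K)
    (hf : ∀ a ∈ K, AnalyticAt 𝕜 f a) (hfK : ∀ a ∈ K, analyticOrderAt f a ≠ ⊤) :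
    ∃ (Z : Finset 𝕜) (m : 𝕜 → ℕ) (C : ℝ), (∀ a ∈ Z, f a = 0) ∧ (∀ z ∈ K, f z = 0 → z ∈ Z) ∧
      ∀ z ∈ K, logMinus ‖f z‖ ≤ C + ∑ a ∈ Z, m a * logMinus ‖z - a‖ := by
  choose! r hr C m hC hm hball using fun a ha => (hf a ha).exists_logMinus_norm_le (hfK a ha)
  obtain ⟨S, hSK, hcover⟩ := hK.elim_nhds_subcover (fun a => ball a (r a))
    fun a ha => ball_mem_nhds a (hr a ha)
  refine ⟨S.filter (f · = 0), m, ∑ a ∈ S, C a, fun a ha => (Finset.mem_filter.1 ha).2, ?_, ?_⟩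
  · intro z hz hfz
    obtain ⟨a, haS, hza⟩ := mem_iUnion₂.1 (hcover hz)
    obtain rfl := (hball a (hSK a haS) z hza).1 hfz
    exact Finset.mem_filter.2 ⟨haS, hfz⟩
  · intro z hz
    obtain ⟨a, haS, hza⟩ := mem_iUnion₂.1 (hcover hz)
    have hterm : m a * logMinus ‖z - a‖ ≤ ∑ b ∈ S.filter (f · = 0), m b * logMinus ‖z - b‖ := by
      have hnonneg : ∀ b ∈ S.filter (f · = 0), 0 ≤ (m b : ℝ) * logMinus ‖z - b‖ :=
        fun b _ => mul_nonneg (Nat.cast_nonneg _) (logMinus_nonneg _)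
      by_cases hfa : f a = 0
      · exact Finset.single_le_sum hnonneg (Finset.mem_filter.2 ⟨haS, hfa⟩)
      · rw [hm a (hSK a haS) hfa, Nat.cast_zero, zero_mul]
        exact Finset.sum_nonneg hnonneg
    have hCa : C a ≤ ∑ b ∈ S, C b :=
      Finset.single_le_sum (fun b hb => hC b (hSK b hb)) haS
    linarith [(hball a (hSK a haS) z hza).2]

end Analytic

theorem continuousOn_integral_ofReal_mul_exp_of_norm_le {G : ℂ → ℝ} {t : ℝ} {Z : Finset ℂ}
    (hZ : (0 : ℂ) ∉ Z) {w : ℂ → ℝ} (hw : ∀ a ∈ Z, 0 ≤ w a) (C : ℝ)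
    (hG : ContinuousOn G (closedBall 0 t \ Z))
    (hGb : ∀ z ∈ closedBall (0 : ℂ) t, ‖G z‖ ≤ C + ∑ a ∈ Z, w a * logMinus ‖z - a‖) :
    ContinuousOn (fun s : ℝ => ∫ θ in (0 : ℝ)..(2 * Real.pi), G ((s : ℂ) * exp (θ * I)))
      (Icc 0 t) := by
  have ha0 : ∀ a ∈ Z, a ≠ 0 := fun a ha h => hZ (h ▸ ha)
  -- for `θ ∈ E` the line `ℝ e^{iθ}` misses `Z` and `log⁻ ‖s e^{iθ} - a‖` is bounded in `s`
  set E := {θ : ℝ | ∀ a ∈ Z, Real.sin (arg a - θ) ≠ 0}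
  have hE : ∀ᵐ θ : ℝ, θ ∈ E := (Filter.eventually_all_finset Z).2 fun a _ => ae_sin_sub_ne_zero _
  have hEo : IsOpen E := by
    simp only [E, ofPred_forall]
    exact isOpen_biInter_finset fun a _ => isOpen_ne_fun (by fun_prop) (by fun_prop)
  have hmem : ∀ s ∈ Icc 0 t, ∀ θ : ℝ, (s : ℂ) * exp (θ * I) ∈ closedBall (0 : ℂ) t := by
    intro s hs θ
    simpa [norm_exp_ofReal_mul_I, abs_of_nonneg hs.1] using hs.2
  have hmemZ : ∀ s : ℝ, ∀ θ ∈ E, (s : ℂ) * exp (θ * I) ∉ Z := fun s θ hθ ha =>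
    ofReal_mul_exp_ne_of_sin_arg_sub_ne_zero (ha0 _ ha) s (hθ _ ha) rfl
  rw [continuousOn_iff_continuous_domRestrict]
  refine intervalIntegral.continuous_of_dominated_interval
    (bound := fun θ => C + ∑ a ∈ Z, w a * (logMinus ‖a‖ + logMinus (Real.sin (arg a - θ))))
    (fun s => ?_) (fun s => ?_) ?_ ?_
  · have hcont : ContinuousOn (fun θ : ℝ => G ((s : ℂ) * exp (θ * I))) E :=
      hG.comp (by fun_prop) fun θ hθ => ⟨hmem s s.2 θ, hmemZ s θ hθ⟩
    rw [← Measure.restrict_eq_self_of_ae_mem hE]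
    exact (hcont.aestronglyMeasurable hEo.measurableSet).restrict
  · filter_upwards [hE] with θ hθ _
    refine (hGb _ (hmem s s.2 θ)).trans (add_le_add le_rfl (Finset.sum_le_sum fun a ha => ?_))
    exact mul_le_mul_of_nonneg_left
      (logMinus_norm_ofReal_mul_exp_sub_le (ha0 a ha) s (hθ a ha)) (hw a ha)
  · have hsum := IntervalIntegrable.sum Z
      (f := fun a θ => w a * (logMinus ‖a‖ + logMinus (Real.sin (arg a - θ)))) fun a _ =>
        (intervalIntegrable_const.add
          (intervalIntegrable_logMinus_sin_sub _ 0 (2 * Real.pi))).const_mul _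
    rw [Finset.sum_fn] at hsum
    exact intervalIntegrable_const.add hsum
  · filter_upwards [hE] with θ hθ _
    exact continuousOn_iff_continuous_domRestrict.1
      (hG.comp (by fun_prop) fun s hs => ⟨hmem s hs θ, hmemZ s θ hθ⟩)

theorem stmt_16 (φ : ℂ → ℝ) (hφ : ContinuousOn φ (ball (0 : ℂ) 1))
    (f : ℂ → ℂ) (hf : DifferentiableOn ℂ f (ball 0 1)) (hf0 : ‖f 0‖ = 1)
    (t : ℝ) (ht0 : 0 < t) (ht1 : t < 1) :
    ContinuousOn
      (fun s : ℝ => ∫ θ in (0 : ℝ)..(2 * Real.pi),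
        φ ((s : ℂ) * Complex.exp ((θ : ℂ) * Complex.I)) *
          logMinus ‖f ((s : ℂ) * Complex.exp ((θ : ℂ) * Complex.I))‖)
      (Icc 0 t) := by
  have hK : closedBall (0 : ℂ) t ⊆ ball 0 1 := closedBall_subset_ball ht1
  have hfa : AnalyticOnNhd ℂ f (ball 0 1) := hf.analyticOnNhd isOpen_ball
  have hf0' : f 0 ≠ 0 := norm_ne_zero_iff.1 (hf0 ▸ one_ne_zero)
  have hord : ∀ a ∈ ball (0 : ℂ) 1, analyticOrderAt f a ≠ ⊤ := fun a ha =>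
    hfa.analyticOrderAt_ne_top_of_isPreconnected (convex_ball 0 1).isPreconnected
      (mem_ball_self one_pos) ha (by simp [analyticOrderAt_eq_zero.2 (Or.inr hf0')])
  obtain ⟨Z, m, C, hZ, hZK, hlog⟩ := (isCompact_closedBall (0 : ℂ) t).exists_logMinus_norm_le
    (fun a ha => hfa a (hK ha)) (fun a ha => hord a (hK ha))
  obtain ⟨B, hB⟩ := (isCompact_closedBall (0 : ℂ) t).exists_bound_of_continuousOn (hφ.mono hK)
  have hB0 : 0 ≤ B := (norm_nonneg _).trans (hB 0 (mem_closedBall_self ht0.le))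
  have hcont : ContinuousOn (fun z => φ z * logMinus ‖f z‖) (closedBall 0 t \ Z) := by
    rintro z ⟨hzK, hzZ⟩
    have hfz : ‖f z‖ ≠ 0 := norm_ne_zero_iff.2 fun h => hzZ (hZK z hzK h)
    exact ((hφ.continuousAt (isOpen_ball.mem_nhds (hK hzK))).mul
      ((continuousAt_logMinus hfz).comp (f := fun x => ‖f x‖)
        (hfa z (hK hzK)).continuousAt.norm)).continuousWithinAt
  have hbound : ∀ z ∈ closedBall (0 : ℂ) t,
      ‖φ z * logMinus ‖f z‖‖ ≤ B * C + ∑ a ∈ Z, B * m a * logMinus ‖z - a‖ := fun z hz =>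
    calc ‖φ z * logMinus ‖f z‖‖ = ‖φ z‖ * logMinus ‖f z‖ := by
          rw [norm_mul, Real.norm_of_nonneg (logMinus_nonneg _)]
      _ ≤ B * (C + ∑ a ∈ Z, m a * logMinus ‖z - a‖) :=
          mul_le_mul (hB z hz) (hlog z hz) (logMinus_nonneg _) hB0
      _ = B * C + ∑ a ∈ Z, B * m a * logMinus ‖z - a‖ := by
          simp only [mul_add, Finset.mul_sum, mul_assoc]
  exact continuousOn_integral_ofReal_mul_exp_of_norm_le (fun h0 => hf0' (hZ 0 h0))
    (fun a _ => by positivity) (B * C) hcont hbound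
end
end

section
/- Let p > 0 and let η_1,…,η_n ∈ 𝕋 be distinct points whose minimal pairwise arc separation is at least α > 0. Then the function z ↦ (1 − |z|²)^{p−1} ∏_{k=1}^n |z − η_k|^{−1} is integrable on 𝔻 with respect to planar Lebesgue measure, and ∫_𝔻 (1 − |z|²)^{p−1} ∏_{k=1}^n |z − η_k|^{−1} dm(z) ≤ c(p, α) < ∞, where c(p, α) depends only on p, n and α. -/
/-!
Write `t = 1 - |z|²` and `r_k = |z - η_k|`. Separation leaves at most one `r_k` below `α / 2`, so
`∏ r_k⁻¹ ≤ (1 + 2/α)ⁿ (∑ r_j⁻¹ + 1)`. On the disc `r_j ≥ t / 2`, and with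
`a = max (1 - p/2) (1/2)` this gives `t^(p-1) r_j⁻¹ ≤ 2 t^(-a) r_j^(-a)`. A rotation moves `η_j`
to `1`, where `|z - 1| ≥ |Im z|`; so everything is bounded by the model integral
`∫_𝔻 (1 - |z|²)^(-a) |Im z|^(-a) dm`. By Fubini its vertical slices are Beta-type integrals
`∫_0^b y^(-a) (b - y)^(-a) dy ≲ b^(1-2a)`, and the model integral is finite because `a < 1`.
-/

open MeasureTheory Metric Complex Set ENNReal
open scoped Classical

noncomputable section

theorem lintegral_Ioo_rpow {c b : ℝ} (hc : -1 < c) (hb : 0 < b) :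
    ∫⁻ y in Ioo 0 b, ENNReal.ofReal (y ^ c) = ENNReal.ofReal (b ^ (c + 1) / (c + 1)) := by
  have hint := intervalIntegral.intervalIntegrable_rpow' (a := 0) (b := b) hc
  rw [intervalIntegrable_iff_integrableOn_Ioo_of_le hb.le] at hint
  rw [← ofReal_integral_eq_lintegral_ofReal hint
    ((ae_restrict_iff' measurableSet_Ioo).2 (ae_of_all _ fun y hy => Real.rpow_nonneg hy.1.le c)),
    ← integral_Ioc_eq_integral_Ioo, ← intervalIntegral.integral_of_le hb.le,
    integral_rpow (Or.inl hc), Real.zero_rpow (by linarith), sub_zero]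

theorem lintegral_Ioo_sub_rpow {c b : ℝ} (hc : -1 < c) (hb : 0 < b) :
    ∫⁻ y in Ioo 0 b, ENNReal.ofReal ((b - y) ^ c) = ENNReal.ofReal (b ^ (c + 1) / (c + 1)) := by
  have hpre : (fun y => b - y) ⁻¹' Ioo 0 b = Ioo 0 b := by
    ext y
    simp only [mem_preimage, mem_Ioo]
    constructor <;> intro h <;> constructor <;> linarith [h.1, h.2]
  have := ((Measure.measurePreserving_sub_left volume b).setLIntegral_comp_preimage_emb
    (measurableEmbedding_subLeft b) (fun y => ENNReal.ofReal (y ^ c)) (Ioo 0 b))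
  rw [hpre] at this
  rw [this, lintegral_Ioo_rpow hc hb]

theorem lintegral_Ioo_comp_abs_le (f : ℝ → ℝ≥0∞) (b : ℝ) :
    ∫⁻ y in Ioo (-b) b, f |y| ≤ 2 * ∫⁻ y in Ioo 0 b, f y := by
  have hneg : ∫⁻ y in Ioo (-b) 0, f |y| = ∫⁻ y in Ioo 0 b, f y := by
    have := (Measure.measurePreserving_neg (volume : Measure ℝ)).setLIntegral_comp_preimage_emb
      (MeasurableEquiv.neg ℝ).measurableEmbedding f (Ioo 0 b)
    rw [show Neg.neg ⁻¹' Ioo 0 b = Ioo (-b) (0 : ℝ) by simp [neg_Ioo]] at this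
    rw [← this]
    exact setLIntegral_congr_fun measurableSet_Ioo fun y hy => by rw [abs_of_neg hy.2]
  have hpos : ∫⁻ y in Ico 0 b, f |y| = ∫⁻ y in Ioo 0 b, f y := by
    rw [setLIntegral_congr Ioo_ae_eq_Ico.symm]
    exact setLIntegral_congr_fun measurableSet_Ioo fun y hy => by rw [abs_of_pos hy.1]
  calc ∫⁻ y in Ioo (-b) b, f |y|
      ≤ ∫⁻ y in Ioo (-b) 0 ∪ Ico 0 b, f |y| := lintegral_mono_set fun y hy => by
        rcases lt_or_ge y 0 with h | h
        exacts [Or.inl ⟨hy.1, h⟩, Or.inr ⟨h, hy.2⟩]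
    _ ≤ (∫⁻ y in Ioo (-b) 0, f |y|) + ∫⁻ y in Ico 0 b, f |y| := lintegral_union_le _ _ _
    _ = 2 * ∫⁻ y in Ioo 0 b, f y := by rw [hneg, hpos, two_mul]

theorem lintegral_Ioo_rpow_mul_sub_rpow_le {d b : ℝ} (hd : -1 < d) (hd0 : d ≤ 0) (hb : 0 < b) :
    ∫⁻ y in Ioo 0 b, ENNReal.ofReal (y ^ d * (b - y) ^ d)
      ≤ ENNReal.ofReal (2 ^ (1 - d) / (d + 1) * b ^ (2 * d + 1)) := by
  -- one of the two factors is at most `(b / 2) ^ d`, the other is bounded by the sum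
  have hsplit : ∀ y ∈ Ioo 0 b, ENNReal.ofReal (y ^ d * (b - y) ^ d)
      ≤ ENNReal.ofReal ((b / 2) ^ d) * (ENNReal.ofReal (y ^ d) + ENNReal.ofReal ((b - y) ^ d)) := by
    intro y ⟨hy0, hyb⟩
    have h1 : 0 ≤ y ^ d := Real.rpow_nonneg hy0.le d
    have h2 : 0 ≤ (b - y) ^ d := Real.rpow_nonneg (by linarith) d
    rw [← ENNReal.ofReal_add h1 h2, ← ENNReal.ofReal_mul (Real.rpow_nonneg (by linarith) d)]
    refine ENNReal.ofReal_le_ofReal ?_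
    rcases le_total y (b / 2) with hy | hy
    · have : (b - y) ^ d ≤ (b / 2) ^ d :=
        Real.rpow_le_rpow_of_nonpos (by linarith) (by linarith) hd0
      nlinarith
    · have : y ^ d ≤ (b / 2) ^ d := Real.rpow_le_rpow_of_nonpos (by linarith) hy hd0
      nlinarith
  calc ∫⁻ y in Ioo 0 b, ENNReal.ofReal (y ^ d * (b - y) ^ d)
      ≤ ∫⁻ y in Ioo 0 b, ENNReal.ofReal ((b / 2) ^ d) *
          (ENNReal.ofReal (y ^ d) + ENNReal.ofReal ((b - y) ^ d)) :=
        setLIntegral_mono (by fun_prop) hsplit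
    _ = ENNReal.ofReal ((b / 2) ^ d * (2 * (b ^ (d + 1) / (d + 1)))) := by
      have hI : 0 ≤ b ^ (d + 1) / (d + 1) := div_nonneg (Real.rpow_nonneg hb.le _) (by linarith)
      rw [lintegral_const_mul' _ _ ENNReal.ofReal_ne_top, lintegral_add_left (by fun_prop),
        lintegral_Ioo_rpow hd hb, lintegral_Ioo_sub_rpow hd hb, ← ENNReal.ofReal_add hI hI,
        ← ENNReal.ofReal_mul (Real.rpow_nonneg (by linarith) d), two_mul]
    _ = ENNReal.ofReal (2 ^ (1 - d) / (d + 1) * b ^ (2 * d + 1)) := by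
      congr 1
      rw [Real.div_rpow hb.le zero_le_two, Real.rpow_sub zero_lt_two, Real.rpow_one,
        Real.rpow_add_one hb.ne', show 2 * d + 1 = d + d + 1 by ring, Real.rpow_add_one hb.ne',
        Real.rpow_add hb]
      field_simp

theorem lintegral_Ioo_sq_sub_sq_rpow_mul_abs_rpow_le {a b : ℝ} (ha0 : 0 ≤ a) (ha1 : a < 1)
    (hb : 0 < b) :
    ∫⁻ y in Ioo (-b) b, ENNReal.ofReal ((b ^ 2 - y ^ 2) ^ (-a) * |y| ^ (-a))
      ≤ ENNReal.ofReal (2 ^ (2 + a) / (1 - a) * b ^ (1 - 3 * a)) := by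
  have hfactor : ∀ y ∈ Ioo 0 b, ENNReal.ofReal ((b ^ 2 - y ^ 2) ^ (-a) * y ^ (-a))
      ≤ ENNReal.ofReal (b ^ (-a)) * ENNReal.ofReal (y ^ (-a) * (b - y) ^ (-a)) := by
    intro y ⟨hy0, hyb⟩
    rw [← ENNReal.ofReal_mul (Real.rpow_nonneg hb.le _)]
    refine ENNReal.ofReal_le_ofReal ?_
    rw [show b ^ 2 - y ^ 2 = (b + y) * (b - y) by ring,
      Real.mul_rpow (by linarith) (by linarith)]
    have : (b + y) ^ (-a) ≤ b ^ (-a) := Real.rpow_le_rpow_of_nonpos hb (by linarith) (by linarith)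
    have : 0 ≤ (b - y) ^ (-a) * y ^ (-a) :=
      mul_nonneg (Real.rpow_nonneg (by linarith) _) (Real.rpow_nonneg hy0.le _)
    nlinarith
  calc ∫⁻ y in Ioo (-b) b, ENNReal.ofReal ((b ^ 2 - y ^ 2) ^ (-a) * |y| ^ (-a))
      ≤ 2 * ∫⁻ y in Ioo 0 b, ENNReal.ofReal ((b ^ 2 - y ^ 2) ^ (-a) * y ^ (-a)) := by
        convert lintegral_Ioo_comp_abs_le
          (fun y => ENNReal.ofReal ((b ^ 2 - y ^ 2) ^ (-a) * y ^ (-a))) b using 6 with y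
        rw [_root_.sq_abs]
    _ ≤ 2 * (ENNReal.ofReal (b ^ (-a)) *
          ENNReal.ofReal (2 ^ (1 - -a) / (-a + 1) * b ^ (2 * -a + 1))) := by
        gcongr
        refine (setLIntegral_mono' measurableSet_Ioo hfactor).trans ?_
        rw [lintegral_const_mul' _ _ ENNReal.ofReal_ne_top]
        gcongr
        exact lintegral_Ioo_rpow_mul_sub_rpow_le (by linarith) (by linarith) hb
    _ = ENNReal.ofReal (2 ^ (2 + a) / (1 - a) * b ^ (1 - 3 * a)) := by
        rw [← ENNReal.ofReal_mul (Real.rpow_nonneg hb.le _), ← ENNReal.ofReal_ofNat 2,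
          ← ENNReal.ofReal_mul zero_le_two]
        congr 1
        have hpow : b ^ (1 - 3 * a) = b ^ (-a) * b ^ (2 * -a + 1) := by
          rw [← Real.rpow_add hb]; ring_nf
        rw [show 2 + a = (1 - -a) + 1 by ring, Real.rpow_add_one two_ne_zero, hpow]
        ring

theorem lintegral_disc_slice_le {a : ℝ} (ha : 1 / 3 ≤ a) (ha1 : a < 1) (x : ℝ) :
    ∫⁻ y, (if x ^ 2 + y ^ 2 < 1 then
        ENNReal.ofReal ((1 - (x ^ 2 + y ^ 2)) ^ (-a) * |y| ^ (-a)) else 0)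
      ≤ (Ioo (-1) 1).indicator
          (fun x => ENNReal.ofReal (2 ^ (2 + a) / (1 - a) * (1 - |x|) ^ ((1 - 3 * a) / 2))) x := by
  by_cases hx : x ∈ Ioo (-1) 1
  · have hx2 : 0 < 1 - x ^ 2 := by nlinarith [hx.1, hx.2]
    set b := Real.sqrt (1 - x ^ 2)
    have hb : 0 < b := Real.sqrt_pos.2 hx2
    have hb2 : b ^ 2 = 1 - x ^ 2 := Real.sq_sqrt hx2.le
    have hslice : (fun y => if x ^ 2 + y ^ 2 < 1 then
          ENNReal.ofReal ((1 - (x ^ 2 + y ^ 2)) ^ (-a) * |y| ^ (-a)) else 0)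
        = (Ioo (-b) b).indicator
          (fun y => ENNReal.ofReal ((b ^ 2 - y ^ 2) ^ (-a) * |y| ^ (-a))) := by
      funext y
      have hy : x ^ 2 + y ^ 2 < 1 ↔ y ∈ Ioo (-b) b := by
        rw [mem_Ioo, ← abs_lt, ← abs_of_pos hb, ← sq_lt_sq, hb2]
        constructor <;> intro h <;> linarith
      simp only [indicator_apply, hy]
      rw [show 1 - (x ^ 2 + y ^ 2) = b ^ 2 - y ^ 2 by rw [hb2]; ring]
    rw [hslice, lintegral_indicator measurableSet_Ioo, indicator_of_mem hx]
    refine (lintegral_Ioo_sq_sub_sq_rpow_mul_abs_rpow_le (by linarith) ha1 hb).trans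
      (ENNReal.ofReal_le_ofReal (mul_le_mul_of_nonneg_left ?_ (by positivity)))
    rw [show b ^ (1 - 3 * a) = (1 - x ^ 2) ^ ((1 - 3 * a) / 2) by
      rw [← hb2, ← Real.rpow_natCast, ← Real.rpow_mul hb.le]; ring_nf]
    have hx' := abs_lt.2 ⟨hx.1, hx.2⟩
    exact Real.rpow_le_rpow_of_nonpos (by linarith)
      (by nlinarith [abs_nonneg x, _root_.sq_abs x]) (by linarith)
  · have hempty : ∀ y, ¬ x ^ 2 + y ^ 2 < 1 := fun y h => hx ⟨by nlinarith, by nlinarith⟩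
    simp only [hempty, if_false, lintegral_zero]
    exact zero_le

theorem lintegral_ball_one_sub_sq_norm_rpow_mul_abs_im_rpow_lt_top {a : ℝ} (ha : 1 / 3 ≤ a)
    (ha1 : a < 1) :
    ∫⁻ z in ball (0 : ℂ) 1, ENNReal.ofReal ((1 - ‖z‖ ^ 2) ^ (-a) * |z.im| ^ (-a)) < ∞ := by
  have hd : -1 < (1 - 3 * a) / 2 := by linarith
  let G : ℝ × ℝ → ℝ≥0∞ := fun q =>
    if q.1 ^ 2 + q.2 ^ 2 < 1 then ENNReal.ofReal ((1 - (q.1 ^ 2 + q.2 ^ 2)) ^ (-a) * |q.2| ^ (-a))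
    else 0
  have hnorm : ∀ z : ℂ, ‖z‖ ^ 2 = z.re ^ 2 + z.im ^ 2 := fun z => by
    rw [Complex.sq_norm, Complex.normSq_apply]; ring
  have hG : ∫⁻ z in ball (0 : ℂ) 1, ENNReal.ofReal ((1 - ‖z‖ ^ 2) ^ (-a) * |z.im| ^ (-a))
      = ∫⁻ q, G q := by
    rw [← lintegral_indicator measurableSet_ball,
      ← Complex.volume_preserving_equiv_real_prod.lintegral_comp_emb
        Complex.measurableEquivRealProd.measurableEmbedding]
    refine lintegral_congr fun z => ?_
    have hmem : z ∈ ball (0 : ℂ) 1 ↔ z.re ^ 2 + z.im ^ 2 < 1 := by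
      rw [mem_ball_zero_iff, ← hnorm, sq_lt_one_iff₀ (norm_nonneg z)]
    simp only [indicator_apply, hmem, hnorm, G]
    rfl
  calc ∫⁻ z in ball (0 : ℂ) 1, ENNReal.ofReal ((1 - ‖z‖ ^ 2) ^ (-a) * |z.im| ^ (-a))
      ≤ ∫⁻ x, ∫⁻ y, G (x, y) := by
        rw [hG, Measure.volume_eq_prod]
        exact lintegral_prod_le G
    _ ≤ ∫⁻ x in Ioo (-1) 1, ENNReal.ofReal (2 ^ (2 + a) / (1 - a)) *
          ENNReal.ofReal ((1 - |x|) ^ ((1 - 3 * a) / 2)) := by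
        refine (lintegral_mono fun x => lintegral_disc_slice_le ha ha1 x).trans_eq ?_
        rw [lintegral_indicator measurableSet_Ioo]
        simp_rw [ENNReal.ofReal_mul (div_nonneg (by positivity) (by linarith) :
          0 ≤ 2 ^ (2 + a) / (1 - a))]
    _ ≤ ENNReal.ofReal (2 ^ (2 + a) / (1 - a)) *
          (2 * ENNReal.ofReal (1 ^ ((1 - 3 * a) / 2 + 1) / ((1 - 3 * a) / 2 + 1))) := by
        rw [lintegral_const_mul' _ _ ENNReal.ofReal_ne_top, ← lintegral_Ioo_sub_rpow hd one_pos]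
        gcongr
        exact lintegral_Ioo_comp_abs_le (fun x => ENNReal.ofReal ((1 - x) ^ ((1 - 3 * a) / 2))) 1
    _ < ∞ := by finiteness

theorem setLIntegral_ball_zero_comp_linearIsometryEquiv {E : Type*} [NormedAddCommGroup E]
    [InnerProductSpace ℝ E] [FiniteDimensional ℝ E] [MeasurableSpace E] [BorelSpace E]
    (f : E ≃ₗᵢ[ℝ] E) (g : E → ℝ≥0∞) (r : ℝ) :
    ∫⁻ x in ball 0 r, g (f x) = ∫⁻ x in ball 0 r, g x := by
  have := f.measurePreserving.setLIntegral_comp_preimage_emb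
    f.toMeasurableEquiv.measurableEmbedding g (ball 0 r)
  rwa [f.preimage_ball, map_zero] at this

theorem volume_setOf_im_eq_zero : volume {z : ℂ | z.im = 0} = 0 :=
  Measure.addHaar_submodule volume (LinearMap.ker imLm) fun h => by
    simpa using LinearMap.congr_fun (LinearMap.ker_eq_top.mp h) I

theorem lintegral_ball_one_sub_sq_norm_rpow_mul_norm_sub_rpow_le {a : ℝ} (ha : 0 ≤ a) {w : ℂ}
    (hw : ‖w‖ = 1) :
    ∫⁻ z in ball (0 : ℂ) 1, ENNReal.ofReal ((1 - ‖z‖ ^ 2) ^ (-a) * ‖z - w‖ ^ (-a))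
      ≤ ∫⁻ z in ball (0 : ℂ) 1, ENNReal.ofReal ((1 - ‖z‖ ^ 2) ^ (-a) * |z.im| ^ (-a)) := by
  let u : Circle := ⟨w, mem_sphere_zero_iff_norm.2 hw⟩
  rw [← setLIntegral_ball_zero_comp_linearIsometryEquiv (rotation u)]
  -- only a.e.: on the real axis `|z.im| ^ (-a)` is the junk value `0`
  refine setLIntegral_mono_ae' measurableSet_ball ?_
  filter_upwards [measure_eq_zero_iff_ae_notMem.1 volume_setOf_im_eq_zero] with z him hz
  have hrot : ‖rotation u z‖ = ‖z‖ := (rotation u).norm_map z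
  have hsub : rotation u z - w = w * (z - 1) := by
    rw [rotation_apply]; show w * z - w = _; ring
  have hnorm : ‖rotation u z - w‖ = ‖z - 1‖ := by rw [hsub, norm_mul, hw, one_mul]
  have hz1 : ‖z‖ < 1 := mem_ball_zero_iff.1 hz
  have him_le : |z.im| ≤ ‖z - 1‖ := by simpa using Complex.abs_im_le_norm (z - 1)
  rw [hrot, hnorm]
  refine ENNReal.ofReal_le_ofReal (mul_le_mul_of_nonneg_left ?_ (Real.rpow_nonneg ?_ _))
  · exact Real.rpow_le_rpow_of_nonpos (abs_pos.2 him) him_le (by linarith)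
  · nlinarith [norm_nonneg z]

theorem prod_inv_norm_sub_le_of_separated {E ι : Type*} [SeminormedAddCommGroup E] [Fintype ι]
    {η : ι → E} {α : ℝ} (hα : 0 < α) (hsep : ∀ j k, j ≠ k → α ≤ ‖η j - η k‖) (z : E) :
    ∏ k, ‖z - η k‖⁻¹ ≤ (1 + 2 / α) ^ Fintype.card ι * (∑ j, ‖z - η j‖⁻¹ + 1) := by
  classical
  set K := 1 + 2 / α
  have hK : 1 ≤ K := le_add_of_nonneg_right (by positivity)
  have hfar : ∀ k, α / 2 ≤ ‖z - η k‖ → ‖z - η k‖⁻¹ ≤ K := fun k hk =>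
    calc ‖z - η k‖⁻¹ ≤ (α / 2)⁻¹ := inv_anti₀ (by positivity) hk
      _ ≤ K := by rw [inv_div]; exact le_add_of_nonneg_left zero_le_one
  have hS : 0 ≤ ∑ j, ‖z - η j‖⁻¹ := by positivity
  by_cases hnear : ∃ j, ‖z - η j‖ < α / 2
  · -- only one of the points can be that close to `z`
    obtain ⟨j, hj⟩ := hnear
    have hothers : ∀ k ∈ Finset.univ.erase j, ‖z - η k‖⁻¹ ≤ K := fun k hk => by
      refine hfar k ?_
      have := (hsep k j (Finset.ne_of_mem_erase hk)).trans (norm_sub_le_norm_sub_add_norm_sub _ z _)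
      rw [norm_sub_rev] at this
      linarith
    calc ∏ k, ‖z - η k‖⁻¹ = ‖z - η j‖⁻¹ * ∏ k ∈ Finset.univ.erase j, ‖z - η k‖⁻¹ :=
          (Finset.mul_prod_erase _ _ (Finset.mem_univ j)).symm
      _ ≤ (∑ j, ‖z - η j‖⁻¹ + 1) * K ^ Fintype.card ι := by
          gcongr
          · linarith [Finset.single_le_sum (fun k _ => inv_nonneg.2 (norm_nonneg (z - η k)))
              (Finset.mem_univ j)]
          · refine ((Finset.prod_le_prod (fun k _ => by positivity) hothers).trans_eq
              (Finset.prod_const K)).trans ?_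
            exact pow_le_pow_right₀ hK (Finset.card_le_univ _)
      _ = _ := mul_comm _ _
  · push Not at hnear
    calc ∏ k, ‖z - η k‖⁻¹ ≤ ∏ _k : ι, K :=
          Finset.prod_le_prod (fun k _ => by positivity) fun k _ => hfar k (hnear k)
      _ = K ^ Fintype.card ι := Finset.prod_const K
      _ ≤ K ^ Fintype.card ι * (∑ j, ‖z - η j‖⁻¹ + 1) :=
          le_mul_of_one_le_right (by positivity) (by linarith)

theorem rpow_mul_inv_le_of_half_le {t r p a : ℝ} (ht : 0 < t) (ht1 : t ≤ 1) (hr : t / 2 ≤ r)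
    (ha0 : 0 ≤ a) (ha1 : a ≤ 1) (hpa : 1 - p / 2 ≤ a) :
    t ^ (p - 1) * r⁻¹ ≤ 2 * (t ^ (-a) * r ^ (-a)) := by
  have hr0 : 0 < r := by linarith
  have hra : r ^ (a - 1) ≤ 2 * t ^ (a - 1) :=
    calc r ^ (a - 1) ≤ (t / 2) ^ (a - 1) :=
          Real.rpow_le_rpow_of_nonpos (by positivity) hr (by linarith)
      _ = 2 ^ (1 - a) * t ^ (a - 1) := by
          rw [Real.div_rpow ht.le zero_le_two, div_eq_inv_mul, ← Real.rpow_neg zero_le_two, neg_sub]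
      _ ≤ 2 * t ^ (a - 1) := by
          gcongr
          exact Real.rpow_le_self_of_one_le one_le_two (by linarith)
  calc t ^ (p - 1) * r⁻¹ = t ^ (p - 1) * r ^ (a - 1) * r ^ (-a) := by
        rw [mul_assoc, ← Real.rpow_add hr0, show a - 1 + -a = -1 by ring, Real.rpow_neg_one]
    _ ≤ t ^ (p - 1) * (2 * t ^ (a - 1)) * r ^ (-a) := by gcongr
    _ = 2 * (t ^ (p + a - 2) * r ^ (-a)) := by
        rw [show p + a - 2 = (p - 1) + (a - 1) by ring, Real.rpow_add ht]; ring
    _ ≤ 2 * (t ^ (-a) * r ^ (-a)) := by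
        have : t ^ (p + a - 2) ≤ t ^ (-a) := Real.rpow_le_rpow_of_exponent_ge ht ht1 (by linarith)
        gcongr

theorem one_sub_sq_norm_rpow_mul_prod_inv_le {n : ℕ} {p a α : ℝ} (hα : 0 < α) (ha0 : 0 ≤ a)
    (ha1 : a ≤ 1) (hpa : 1 - p / 2 ≤ a) {η : Fin n → ℂ} (hη : ∀ j, ‖η j‖ = 1)
    (hsep : ∀ j k, j ≠ k → α ≤ ‖η j - η k‖) {z : ℂ} (hz : z ∈ ball (0 : ℂ) 1) :
    (1 - ‖z‖ ^ 2) ^ (p - 1) * ∏ k, ‖z - η k‖⁻¹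
      ≤ 2 * (1 + 2 / α) ^ n * (∑ j, (1 - ‖z‖ ^ 2) ^ (-a) * ‖z - η j‖ ^ (-a)
          + 2 * ((1 - ‖z‖ ^ 2) ^ (-a) * ‖z - 1‖ ^ (-a))) := by
  set t := 1 - ‖z‖ ^ 2
  have hz1 : ‖z‖ < 1 := mem_ball_zero_iff.1 hz
  have ht : 0 < t := by nlinarith [norm_nonneg z]
  have ht1 : t ≤ 1 := by nlinarith [norm_nonneg z]
  have hdist : ∀ w : ℂ, ‖w‖ = 1 → t / 2 ≤ ‖z - w‖ := fun w hw => by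
    have := norm_sub_norm_le w z
    rw [hw, norm_sub_rev] at this
    nlinarith [norm_nonneg z]
  have hterm : ∀ w : ℂ, ‖w‖ = 1 → t ^ (p - 1) * ‖z - w‖⁻¹ ≤ 2 * (t ^ (-a) * ‖z - w‖ ^ (-a)) :=
    fun w hw => rpow_mul_inv_le_of_half_le ht ht1 (hdist w hw) ha0 ha1 hpa
  -- `‖z - 1‖ ≤ 2` on the disc, so the constant term is absorbed by the kernel at the point `1`
  have hconst : t ^ (p - 1) ≤ 2 * (2 * (t ^ (-a) * ‖z - 1‖ ^ (-a))) := by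
    have h1 : 0 < ‖z - 1‖ := by linarith [hdist 1 norm_one]
    have h2 : ‖z - 1‖ ≤ 2 := (norm_sub_le z 1).trans (by rw [norm_one]; linarith)
    calc t ^ (p - 1) = t ^ (p - 1) * ‖z - 1‖⁻¹ * ‖z - 1‖ := by field_simp
      _ ≤ 2 * (t ^ (-a) * ‖z - 1‖ ^ (-a)) * 2 :=
          mul_le_mul (hterm 1 norm_one) h2 h1.le (by positivity)
      _ = _ := by ring
  have hprod := prod_inv_norm_sub_le_of_separated hα hsep z
  rw [Fintype.card_fin] at hprod
  calc t ^ (p - 1) * ∏ k, ‖z - η k‖⁻¹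
      ≤ t ^ (p - 1) * ((1 + 2 / α) ^ n * (∑ j, ‖z - η j‖⁻¹ + 1)) := by gcongr
    _ = (1 + 2 / α) ^ n * (∑ j, t ^ (p - 1) * ‖z - η j‖⁻¹ + t ^ (p - 1)) := by
        rw [← Finset.mul_sum]; ring
    _ ≤ (1 + 2 / α) ^ n * (∑ j, 2 * (t ^ (-a) * ‖z - η j‖ ^ (-a))
          + 2 * (2 * (t ^ (-a) * ‖z - 1‖ ^ (-a)))) :=
        mul_le_mul_of_nonneg_left
          (add_le_add (Finset.sum_le_sum fun j _ => hterm (η j) (hη j)) hconst) (by positivity)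
    _ = _ := by rw [← Finset.mul_sum]; ring

theorem lintegral_ball_one_sub_sq_norm_rpow_mul_prod_inv_le {n : ℕ} {p a α : ℝ} (hα : 0 < α)
    (ha0 : 0 ≤ a) (ha1 : a ≤ 1) (hpa : 1 - p / 2 ≤ a) {η : Fin n → ℂ} (hη : ∀ j, ‖η j‖ = 1)
    (hsep : ∀ j k, j ≠ k → α ≤ ‖η j - η k‖) :
    ∫⁻ z in ball (0 : ℂ) 1, ENNReal.ofReal ((1 - ‖z‖ ^ 2) ^ (p - 1) * ∏ k, ‖z - η k‖⁻¹)
      ≤ ENNReal.ofReal (2 * (1 + 2 / α) ^ n) * ((n + 2) *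
          ∫⁻ z in ball (0 : ℂ) 1, ENNReal.ofReal ((1 - ‖z‖ ^ 2) ^ (-a) * |z.im| ^ (-a))) := by
  set W := ∫⁻ z in ball (0 : ℂ) 1, ENNReal.ofReal ((1 - ‖z‖ ^ 2) ^ (-a) * |z.im| ^ (-a))
  let g : ℂ → ℂ → ℝ≥0∞ := fun w z => ENNReal.ofReal ((1 - ‖z‖ ^ 2) ^ (-a) * ‖z - w‖ ^ (-a))
  have hgm : ∀ w, Measurable (g w) := fun w => by fun_prop
  have hgW : ∀ w : ℂ, ‖w‖ = 1 → ∫⁻ z in ball (0 : ℂ) 1, g w z ≤ W := fun w hw =>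
    lintegral_ball_one_sub_sq_norm_rpow_mul_norm_sub_rpow_le ha0 hw
  calc ∫⁻ z in ball (0 : ℂ) 1, ENNReal.ofReal ((1 - ‖z‖ ^ 2) ^ (p - 1) * ∏ k, ‖z - η k‖⁻¹)
      ≤ ∫⁻ z in ball (0 : ℂ) 1,
          ENNReal.ofReal (2 * (1 + 2 / α) ^ n) * (∑ j, g (η j) z + 2 * g 1 z) := by
        refine setLIntegral_mono' measurableSet_ball fun z hz => ?_
        have ht : 0 ≤ 1 - ‖z‖ ^ 2 := by nlinarith [norm_nonneg z, mem_ball_zero_iff.1 hz]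
        refine (ENNReal.ofReal_le_ofReal (one_sub_sq_norm_rpow_mul_prod_inv_le hα ha0 ha1 hpa hη
          hsep hz)).trans_eq ?_
        rw [ENNReal.ofReal_mul (show 0 ≤ 2 * (1 + 2 / α) ^ n by positivity),
          ENNReal.ofReal_add (by positivity) (by positivity),
          ENNReal.ofReal_sum_of_nonneg fun j _ => by positivity]
        congr 2
        rw [ENNReal.ofReal_mul zero_le_two, ENNReal.ofReal_ofNat]
    _ = ENNReal.ofReal (2 * (1 + 2 / α) ^ n) *
          ((∑ j, ∫⁻ z in ball (0 : ℂ) 1, g (η j) z) + 2 * ∫⁻ z in ball (0 : ℂ) 1, g 1 z) := by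
        rw [lintegral_const_mul' _ _ ENNReal.ofReal_ne_top,
          lintegral_add_right _ ((hgm 1).const_mul 2), lintegral_const_mul _ (hgm 1),
          lintegral_finsetSum _ fun j _ => hgm (η j)]
    _ ≤ ENNReal.ofReal (2 * (1 + 2 / α) ^ n) * (∑ _j : Fin n, W + 2 * W) := by
        gcongr with j
        · exact hgW (η j) (hη j)
        · exact hgW 1 norm_one
    _ = ENNReal.ofReal (2 * (1 + 2 / α) ^ n) * ((n + 2) * W) := by
        rw [Finset.sum_const, Finset.card_univ, Fintype.card_fin, nsmul_eq_mul, add_mul]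

theorem integrable_and_integral_le_of_lintegral_ofReal_le {X : Type*} [MeasurableSpace X]
    {μ : Measure X} {f : X → ℝ} {B : ℝ≥0∞} (hfm : AEStronglyMeasurable f μ) (hf : 0 ≤ᵐ[μ] f)
    (hB : ∫⁻ x, ENNReal.ofReal (f x) ∂μ ≤ B) (hBtop : B ≠ ∞) :
    Integrable f μ ∧ ∫ x, f x ∂μ ≤ B.toReal := by
  refine ⟨(lintegral_ofReal_ne_top_iff_integrable hfm hf).1 (ne_top_of_le_ne_top hBtop hB), ?_⟩
  rw [integral_eq_lintegral_of_nonneg_ae hf hfm]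
  exact ENNReal.toReal_mono hBtop hB

theorem stmt_17 (n : ℕ) (p : ℝ) (hp : 0 < p) (α : ℝ) (hα : 0 < α) :
    ∃ c : ℝ, 0 < c ∧
      ∀ η : Fin n → ℂ, (∀ j, ‖η j‖ = 1) →
        (∀ j k, j ≠ k → α ≤ ‖η j - η k‖) →
      IntegrableOn
        (fun z : ℂ => (1 - ‖z‖ ^ 2) ^ (p - 1) * ∏ k, (‖z - η k‖)⁻¹)
        (ball (0 : ℂ) 1) volume ∧
      (∫ z in ball (0 : ℂ) 1,
          (1 - ‖z‖ ^ 2) ^ (p - 1) * ∏ k, (‖z - η k‖)⁻¹) ≤ c := by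
  -- `1 - p / 2 ≤ a` lets the kernel absorb the weight; `a < 1` keeps the model integral finite
  set a := max (1 - p / 2) (1 / 2)
  have ha : 1 / 2 ≤ a := le_max_right _ _
  have ha1 : a < 1 := max_lt (by linarith) (by norm_num)
  set B := ENNReal.ofReal (2 * (1 + 2 / α) ^ n) * ((n + 2) *
    ∫⁻ z in ball (0 : ℂ) 1, ENNReal.ofReal ((1 - ‖z‖ ^ 2) ^ (-a) * |z.im| ^ (-a)))
  have hB : B ≠ ∞ := by
    have := lintegral_ball_one_sub_sq_norm_rpow_mul_abs_im_rpow_lt_top (by linarith) ha1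
    simp only [B]
    finiteness
  refine ⟨B.toReal + 1, by positivity, fun η hη hsep => ?_⟩
  have hnonneg : 0 ≤ᵐ[volume.restrict (ball (0 : ℂ) 1)]
      fun z => (1 - ‖z‖ ^ 2) ^ (p - 1) * ∏ k, ‖z - η k‖⁻¹ :=
    (ae_restrict_iff' measurableSet_ball).2 <| ae_of_all _ fun z hz =>
      mul_nonneg (Real.rpow_nonneg (by nlinarith [norm_nonneg z, mem_ball_zero_iff.1 hz]) _)
        (by positivity)
  obtain ⟨hint, hle⟩ := integrable_and_integral_le_of_lintegral_ofReal_le (by fun_prop) hnonneg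
    (lintegral_ball_one_sub_sq_norm_rpow_mul_prod_inv_le hα (by linarith) ha1.le
      (le_max_left _ _) hη hsep) hB
  exact ⟨hint, hle.trans (lt_add_one _).le⟩

end
end

section
/- Let p ≥ 0, let φ be a nonnegative function on 𝔻 and let f be holomorphic on 𝔻, with f_s(z) := f(sz). Suppose that for every 0 ≤ s < 1, ∑_{a ∈ Z(f_s)} (1 − |a|²)^{p+1} φ(sa) ≤ ∫_𝔻 (1 − |z|²)^{p−1} φ(sz) log⁺|f(sz)| dm(z). Then for every 0 < δ < 1, ∑_{a ∈ Z(f)} (1 − |a|²)^{p+1} φ(a) ≤ sup_{1−δ<s<1} ∫_𝔻 (1 − |z|²)^{p−1} φ(sz) log⁺|f(sz)| dm(z). -/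
open MeasureTheory Metric Complex Set ENNReal
open scoped Classical

noncomputable section

/-!
Finitely many zeros `a` of `f` lie in a disc of radius `r < 1`. For `s ∈ (max (1 - δ) r, 1)`
the points `a / s` are zeros of `f_s` of the same multiplicity, so the hypothesis at `s` bounds
`∑ (1 - |a / s|²)^{p+1} φ(a)` over these zeros by the supremum; letting `s → 1⁻` gives the bound
for every finite partial sum of the zero sum of `f`.
-/

open Filter Topology

lemma zeroOrder_comp_const_mul (f : ℂ → ℂ) {c : ℂ} (hc : c ≠ 0) (a : ℂ) :
    zeroOrder (fun z => f (c * z)) a = zeroOrder f (c * a) := by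
  have hg : AnalyticAt ℂ (c * ·) a := by fun_prop
  have hg' : deriv (c * ·) a ≠ 0 := by simpa using hc
  have hcomp : (fun z => f (c * z)) = f ∘ (c * ·) := rfl
  simp only [zeroOrder, hcomp, analyticAt_comp_iff_of_deriv_ne_zero hg hg',
    analyticOrderAt_comp_of_deriv_ne_zero hg hg']

lemma sum_zeroOrder_le_zeroSum_comp_const_mul (f : ℂ → ℂ) (w : ℂ → ℝ) {c : ℂ} (hc : c ≠ 0)
    (F : Finset (ball (0 : ℂ) 1)) (hF : ∀ a ∈ F, ‖(a : ℂ)‖ < ‖c‖) :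
    ∑ a ∈ F, (zeroOrder f a : ℝ≥0∞) * ENNReal.ofReal (w (a / c))
      ≤ zeroSum (fun z => f (c * z)) w := by
  let j : F → ball (0 : ℂ) 1 := fun a =>
    ⟨a / c, by simpa [norm_div, div_lt_one (norm_pos_iff.mpr hc)] using hF a a.2⟩
  have hj : Function.Injective j := fun a b hab =>
    Subtype.ext <| Subtype.ext <| (div_left_inj' hc).mp (congrArg Subtype.val hab)
  calc ∑ a ∈ F, (zeroOrder f a : ℝ≥0∞) * ENNReal.ofReal (w (a / c))
      = ∑' a : F, (zeroOrder (fun z => f (c * z)) (j a) : ℝ≥0∞) * ENNReal.ofReal (w (j a)) := by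
        rw [← Finset.tsum_subtype]
        refine tsum_congr fun a => ?_
        simp [j, zeroOrder_comp_const_mul f hc, mul_div_cancel₀ _ hc]
    _ ≤ zeroSum (fun z => f (c * z)) w :=
        ENNReal.tsum_comp_le_tsum_of_injective hj
          (fun b => (zeroOrder (fun z => f (c * z)) b : ℝ≥0∞) * ENNReal.ofReal (w b))

lemma Finset.exists_lt_one_forall_norm_le (F : Finset (ball (0 : ℂ) 1)) :
    ∃ r < 1, ∀ a ∈ F, ‖(a : ℂ)‖ ≤ r := by
  refine ⟨(F.sup fun a => ‖(a : ℂ)‖₊ : NNReal), ?_, fun a ha =>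
    NNReal.coe_le_coe.mpr (Finset.le_sup (f := fun a : ball (0 : ℂ) 1 => ‖(a : ℂ)‖₊) ha)⟩
  rw [NNReal.coe_lt_one, Finset.sup_lt_iff zero_lt_one]
  exact fun a _ => by simpa [← NNReal.coe_lt_one] using mem_ball_zero_iff.mp a.2

lemma tendsto_one_sub_norm_div_sq_rpow {x : ℂ} (hx : ‖x‖ < 1) (q : ℝ) :
    Tendsto (fun s : ℝ => (1 - ‖x / s‖ ^ 2) ^ q) (𝓝 1) (𝓝 ((1 - ‖x‖ ^ 2) ^ q)) := by
  have hbase : 1 - ‖x / ((1 : ℝ) : ℂ)‖ ^ 2 ≠ 0 := by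
    simp only [Complex.ofReal_one, div_one]; nlinarith [norm_nonneg x]
  have : ContinuousAt (fun s : ℝ => (1 - ‖x / s‖ ^ 2) ^ q) 1 :=
    ContinuousAt.rpow_const (by fun_prop (disch := simp)) (Or.inl hbase)
  simpa using this.tendsto

theorem stmt_18_general (p : ℝ)
    (φ : ℂ → ℝ)
    (f : ℂ → ℂ)
    (H : ∀ s : ℝ, 0 ≤ s → s < 1 →
      zeroSum (fun z => f ((s : ℂ) * z))
          (fun a => (1 - ‖a‖ ^ 2) ^ (p + 1) * φ ((s : ℂ) * a))
        ≤ ∫⁻ z in ball (0 : ℂ) 1,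
            ENNReal.ofReal ((1 - ‖z‖ ^ 2) ^ (p - 1) * φ ((s : ℂ) * z) *
              logPlus (‖f ((s : ℂ) * z)‖)))
    (δ : ℝ) (hδ0 : 0 < δ) (hδ1 : δ < 1) :
    zeroSum f (fun a => (1 - ‖a‖ ^ 2) ^ (p + 1) * φ a)
      ≤ ⨆ s : (Ioo (1 - δ) 1 : Set ℝ), ∫⁻ z in ball (0 : ℂ) 1,
          ENNReal.ofReal ((1 - ‖z‖ ^ 2) ^ (p - 1) * φ (((s : ℝ) : ℂ) * z) *
            logPlus (‖f (((s : ℝ) : ℂ) * z)‖)) := by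
  rw [zeroSum, ENNReal.tsum_eq_iSup_sum]
  refine iSup_le fun F => ?_
  obtain ⟨r, hr1, hFr⟩ := F.exists_lt_one_forall_norm_le
  let I (s : ℝ) : ℝ≥0∞ := ∫⁻ z in ball (0 : ℂ) 1,
    ENNReal.ofReal ((1 - ‖z‖ ^ 2) ^ (p - 1) * φ ((s : ℂ) * z) * logPlus ‖f ((s : ℂ) * z)‖)
  change _ ≤ ⨆ s : Ioo (1 - δ) 1, I s
  let T (s : ℝ) (a : ball (0 : ℂ) 1) : ℝ≥0∞ :=
    zeroOrder f a * ENNReal.ofReal ((1 - ‖(a : ℂ) / s‖ ^ 2) ^ (p + 1) * φ a)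
  have hbound : ∀ s ∈ Ioo (max (1 - δ) r) 1, ∑ a ∈ F, T s a ≤ ⨆ t : Ioo (1 - δ) 1, I t := by
    rintro s ⟨hs₀, hs1⟩
    obtain ⟨hδs, hrs⟩ := max_lt_iff.mp hs₀
    have hs0 : 0 < s := by linarith
    have hsC : (s : ℂ) ≠ 0 := by exact_mod_cast hs0.ne'
    calc ∑ a ∈ F, T s a
        = ∑ a ∈ F, (zeroOrder f a : ℝ≥0∞) *
            ENNReal.ofReal ((1 - ‖(a : ℂ) / s‖ ^ 2) ^ (p + 1) * φ (s * (a / s))) := by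
          simp only [T, mul_div_cancel₀ _ hsC]
      _ ≤ zeroSum (fun z => f (s * z)) (fun b => (1 - ‖b‖ ^ 2) ^ (p + 1) * φ (s * b)) :=
          sum_zeroOrder_le_zeroSum_comp_const_mul f _ hsC F fun a ha => by
            simpa [abs_of_pos hs0] using (hFr a ha).trans_lt hrs
      _ ≤ I s := H s hs0.le hs1
      _ ≤ ⨆ t : Ioo (1 - δ) 1, I t := le_iSup_of_le (⟨s, hδs, hs1⟩ : Ioo (1 - δ) 1) le_rfl
  have hlim : Tendsto (fun s => ∑ a ∈ F, T s a) (𝓝[<] 1)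
      (𝓝 (∑ a ∈ F, zeroOrder f a * ENNReal.ofReal ((1 - ‖(a : ℂ)‖ ^ 2) ^ (p + 1) * φ a))) :=
    tendsto_finsetSum F fun a _ => ENNReal.Tendsto.const_mul
      (ENNReal.tendsto_ofReal (((tendsto_one_sub_norm_div_sq_rpow
        (mem_ball_zero_iff.mp a.2) _).mul_const _).mono_left nhdsWithin_le_nhds))
      (Or.inr (ENNReal.natCast_ne_top _))
  have hs₀1 : max (1 - δ) r < 1 := max_lt (by linarith) hr1
  exact le_of_tendsto hlim (eventually_of_mem (Ioo_mem_nhdsLT hs₀1) hbound)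

theorem stmt_18 (p : ℝ) (hp : 0 ≤ p)
    (φ : ℂ → ℝ) (hφ : ∀ z ∈ ball (0 : ℂ) 1, 0 ≤ φ z)
    (f : ℂ → ℂ) (hf : DifferentiableOn ℂ f (ball 0 1))
    (H : ∀ s : ℝ, 0 ≤ s → s < 1 →
      zeroSum (fun z => f ((s : ℂ) * z))
          (fun a => (1 - ‖a‖ ^ 2) ^ (p + 1) * φ ((s : ℂ) * a))
        ≤ ∫⁻ z in ball (0 : ℂ) 1,
            ENNReal.ofReal ((1 - ‖z‖ ^ 2) ^ (p - 1) * φ ((s : ℂ) * z) *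
              logPlus (‖f ((s : ℂ) * z)‖)))
    (δ : ℝ) (hδ0 : 0 < δ) (hδ1 : δ < 1) :
    zeroSum f (fun a => (1 - ‖a‖ ^ 2) ^ (p + 1) * φ a)
      ≤ ⨆ s : (Ioo (1 - δ) 1 : Set ℝ), ∫⁻ z in ball (0 : ℂ) 1,
          ENNReal.ofReal ((1 - ‖z‖ ^ 2) ^ (p - 1) * φ (((s : ℝ) : ℂ) * z) *
            logPlus (‖f (((s : ℝ) : ℂ) * z)‖)) :=
  stmt_18_general p φ f H δ hδ0 hδ1
end
end
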